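/- arXiv:1410.8404 — 7 statements merged into one kernel-verified Lean document; each statement's English description precedes it below -/
import Mathlib

section
/- Let B be a finite set of real numbers and let A be a nonempty subset of B, with elements of A listed in increasing order as a_1 < a_2 < … < a_m. Then the number of distinct consecutive differences of A satisfies |D(A)| ≤ √(2|B|) · |A+B|/|B| + 1, where D(A) = {a_{i+1} − a_i : 1 ≤ i ≤ m−1}. -/
open Finset Pointwise

/-- The set of consecutive differences of a finite set of reals,
listed in increasing order. -/
noncomputable def consecDiffs (A : Finset ℝ) : Finset ℝ :=
  (List.zipWith (fun x y => y - x) (A.sort (· ≤ ·)) (A.sort (· ≤ ·)).tail).toFinset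

lemma mem_zipWith_tail {α β : Type*} (f : α → α → β) :
    ∀ (l : List α) (z : β), z ∈ List.zipWith f l l.tail →
      ∃ i : ℕ, ∃ h : i + 1 < l.length,
        f (l.get ⟨i, by omega⟩) (l.get ⟨i + 1, h⟩) = z
  | [], z, hz => by simp at hz
  | [x], z, hz => by simp at hz
  | x :: y :: t, z, hz => by
      have : List.zipWith f (x :: y :: t) (x :: y :: t).tail
          = f x y :: List.zipWith f (y :: t) (y :: t).tail := rfl
      rw [this, List.mem_cons] at hz
      rcases hz with h | h
      · exact ⟨0, by simp, h.symm⟩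
      · obtain ⟨i, hi, he⟩ := mem_zipWith_tail f (y :: t) z h
        refine ⟨i + 1, by simpa using Nat.succ_lt_succ hi, ?_⟩
        simpa using he

lemma exists_consec (A : Finset ℝ) {d : ℝ} (hd : d ∈ consecDiffs A) :
    ∃ x, x ∈ A ∧ x + d ∈ A ∧ 0 < d ∧ ∀ a ∈ A, ¬(x < a ∧ a < x + d) := by
  classical
  rw [consecDiffs, List.mem_toFinset] at hd
  set l := A.sort (· ≤ ·) with hl
  obtain ⟨i, hi, he⟩ := mem_zipWith_tail _ _ _ hd
  have hs : l.Pairwise (· < ·) := A.sortedLT_sort.pairwise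
  have hsle : l.Pairwise (· ≤ ·) := A.pairwise_sort _
  have hmemA : ∀ j : Fin l.length, l.get j ∈ A := by
    intro j
    have : l.get j ∈ l := by
      have h := l.get_mem j
      simpa using h
    exact (Finset.mem_sort _).1 this
  have hlt : l.get ⟨i, by omega⟩ < l.get ⟨i + 1, hi⟩ :=
    hs.rel_get_of_lt (by simp [Fin.lt_def])
  refine ⟨l.get ⟨i, by omega⟩, hmemA _, ?_, by linarith [hlt], ?_⟩
  · have : l.get ⟨i, by omega⟩ + d = l.get ⟨i + 1, hi⟩ := by
      rw [← he]; ring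
    rw [this]; exact hmemA _
  · intro a ha ⟨h1, h2⟩
    have hxd : l.get ⟨i, by omega⟩ + d = l.get ⟨i + 1, hi⟩ := by
      rw [← he]; ring
    rw [hxd] at h2
    have ha' : a ∈ l := by rw [hl, Finset.mem_sort]; exact ha
    obtain ⟨k, hk⟩ := List.mem_iff_get.mp ha'
    subst hk
    have hik : (⟨i, by omega⟩ : Fin l.length) < k := by
      by_contra hc
      push_neg at hc
      exact absurd h1 (not_lt.2 (hsle.rel_get_of_le hc))
    have hki : k < (⟨i + 1, hi⟩ : Fin l.length) := by
      by_contra hc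
      push_neg at hc
      exact absurd h2 (not_lt.2 (hsle.rel_get_of_le hc))
    rw [Fin.lt_def] at hik hki
    simp at hik hki
    omega

lemma nat_card_sq_le_two_mul_sum (s : Finset ℕ) (h1 : ∀ x ∈ s, 1 ≤ x) :
    s.card ^ 2 ≤ 2 * ∑ x ∈ s, x := by
  induction s using Finset.induction_on_max with
  | empty => simp
  | insert a s ha ih =>
    have hans : a ∉ s := fun h => lt_irrefl a (ha a h)
    have hsub : s ⊆ Finset.Icc 1 (a - 1) := by
      intro x hx
      have := ha x hx
      have := h1 x (Finset.mem_insert_of_mem hx)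
      rw [Finset.mem_Icc]; omega
    have hcard : s.card ≤ a - 1 := by
      have := Finset.card_le_card hsub
      simpa [Nat.card_Icc] using this
    have ha1 : 1 ≤ a := h1 a (Finset.mem_insert_self a s)
    have ih' := ih fun x hx => h1 x (Finset.mem_insert_of_mem hx)
    rw [Finset.card_insert_of_notMem hans, Finset.sum_insert hans]
    have hk : s.card + 1 ≤ a := by omega
    nlinarith [ih']

theorem consecDiffs_card_le (B A : Finset ℝ) (hA : A.Nonempty) (hAB : A ⊆ B) :
    ((consecDiffs A).card : ℝ) ≤
      Real.sqrt (2 * B.card) * ((A + B).card : ℝ) / (B.card : ℝ) + 1 := by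
  classical
  obtain ⟨a0, ha0⟩ := hA
  have hB : B.Nonempty := ⟨a0, hAB ha0⟩
  set D := consecDiffs A with hD
  set S := A + B with hS
  set N := S.card with hN
  set n := B.card with hn
  have hnpos : 0 < n := Finset.card_pos.2 hB
  -- choose representatives
  have hrep : ∀ d : ℝ, ∃ x : ℝ, d ∈ D →
      x ∈ A ∧ x + d ∈ A ∧ 0 < d ∧ ∀ a ∈ A, ¬(x < a ∧ a < x + d) := by
    intro d
    by_cases hd : d ∈ D
    · obtain ⟨x, h⟩ := exists_consec A hd
      exact ⟨x, fun _ => h⟩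
    · exact ⟨0, fun h => absurd h hd⟩
  choose r hr using hrep
  set T : Finset (ℝ × ℝ) := D ×ˢ B with hT
  set J : ℝ × ℝ → Finset ℝ :=
    fun p => S.filter (fun z => r p.1 + p.2 ≤ z ∧ z < r p.1 + p.1 + p.2) with hJ
  set g : ℝ × ℝ → ℝ := fun p => r p.1 + p.2 with hg
  -- basic membership facts
  have hgS : ∀ p ∈ T, g p ∈ S := by
    intro p hp
    rw [hT, Finset.mem_product] at hp
    exact Finset.add_mem_add (hr p.1 hp.1).1 hp.2
  have hgdS : ∀ p ∈ T, g p + p.1 ∈ S := by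
    intro p hp
    rw [hT, Finset.mem_product] at hp
    have : r p.1 + p.1 + p.2 = g p + p.1 := by rw [hg]; ring
    rw [← this]
    exact Finset.add_mem_add (hr p.1 hp.1).2.1 hp.2
  have hJpos : ∀ p ∈ T, 1 ≤ (J p).card := by
    intro p hp
    have hp' := hp
    rw [hT, Finset.mem_product] at hp'
    have hd := (hr p.1 hp'.1).2.2.1
    refine Finset.card_pos.2 ⟨r p.1 + p.2, ?_⟩
    rw [hJ, Finset.mem_filter]
    exact ⟨hgS p hp, le_refl _, by linarith⟩
  -- Claim A : for fixed b, the intervals are pairwise disjoint, so the sum of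
  -- card (J (d, b)) over d ∈ D is at most N.
  have keydisj : ∀ d ∈ D, ∀ d' ∈ D, ∀ b z : ℝ,
      (r d + b ≤ z ∧ z < r d + d + b) → (r d' + b ≤ z ∧ z < r d' + d' + b) →
      r d ≤ r d' → d ≠ d' → False := by
    intro d hd d' hd' b z hz hz' hle hne
    obtain ⟨hx, hy, hdpos, hcons⟩ := hr d hd
    obtain ⟨hx', hy', hdpos', hcons'⟩ := hr d' hd'
    rcases eq_or_lt_of_le hle with heq | hlt
    · rcases lt_trichotomy d d' with h | h | h
      · exact hcons' (r d + d) hy ⟨by rw [← heq]; linarith, by rw [← heq]; linarith⟩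
      · exact hne h
      · exact hcons (r d' + d') hy' ⟨by rw [heq]; linarith, by rw [heq]; linarith⟩
    · exact hcons (r d') hx' ⟨hlt, by linarith [hz.2, hz'.1]⟩
  have claimA : ∀ b ∈ B, (∑ d ∈ D, (J (d, b)).card) ≤ N := by
    intro b hb
    have hdisj : ∀ d ∈ (D : Set ℝ), ∀ d' ∈ (D : Set ℝ), d ≠ d' →
        Disjoint (J (d, b)) (J (d', b)) := by
      intro d hd d' hd' hne
      rw [Finset.disjoint_left]
      intro z hz hz'
      rw [hJ, Finset.mem_filter] at hz hz'
      rcases le_total (r d) (r d') with h | h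
      · exact keydisj d hd d' hd' b z hz.2 hz'.2 h hne
      · exact keydisj d' hd' d hd b z hz'.2 hz.2 h (Ne.symm hne)
    calc (∑ d ∈ D, (J (d, b)).card)
        = (D.biUnion (fun d => J (d, b))).card := (Finset.card_biUnion hdisj).symm
      _ ≤ N := by
          apply Finset.card_le_card
          intro z hz
          rw [Finset.mem_biUnion] at hz
          obtain ⟨d, hd, hzd⟩ := hz
          exact (Finset.mem_filter.1 hzd).1
  have totalA : (∑ p ∈ T, (J p).card) ≤ n * N := by
    rw [hT, Finset.sum_product_right]
    calc (∑ b ∈ B, ∑ d ∈ D, (J (d, b)).card)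
        ≤ ∑ b ∈ B, N := Finset.sum_le_sum claimA
      _ = n * N := by rw [Finset.sum_const, smul_eq_mul]
  -- Claim B : on each fiber of g, the map p ↦ card (J p) is injective.
  have keyinj : ∀ p ∈ T, ∀ q ∈ T, g p = g q → p.1 < q.1 → (J p).card < (J q).card := by
    intro p hp q hq hgeq hlt
    have hTp := hp; have hTq := hq
    rw [hT, Finset.mem_product] at hTp hTq
    have hdpos := (hr p.1 hTp.1).2.2.1
    have hsub : J p ⊆ J q := by
      intro z hz
      rw [hJ, Finset.mem_filter] at hz ⊢
      refine ⟨hz.1, ?_, ?_⟩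
      · have := hz.2.1
        have h2 : r p.1 + p.2 = r q.1 + q.2 := hgeq
        linarith
      · have := hz.2.2
        have h2 : r p.1 + p.2 = r q.1 + q.2 := hgeq
        linarith
    have hmem : g p + p.1 ∈ J q := by
      rw [hJ, Finset.mem_filter]
      have h2 : r p.1 + p.2 = r q.1 + q.2 := hgeq
      refine ⟨hgdS p hp, ?_, ?_⟩
      · rw [hg]; simp only []; linarith
      · rw [hg]; simp only []; linarith
    have hnotmem : g p + p.1 ∉ J p := by
      rw [hJ, Finset.mem_filter]
      rw [hg]
      intro hcon
      have := hcon.2.2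
      simp only [] at this
      linarith
    exact Finset.card_lt_card ⟨hsub, fun hsub' => hnotmem (hsub' hmem)⟩
  -- fiberwise counting
  have hfibcard : (∑ u ∈ S, (T.filter (fun p => g p = u)).card) = D.card * n := by
    rw [← Finset.card_eq_sum_card_fiberwise hgS, hT, Finset.card_product]
  have hfib_sq : ∀ u ∈ S,
      (T.filter (fun p => g p = u)).card ^ 2
        ≤ 2 * ∑ p ∈ T.filter (fun p => g p = u), (J p).card := by
    intro u hu
    set t := T.filter (fun p => g p = u) with ht
    have htT : t ⊆ T := Finset.filter_subset _ _
    have hinj : Set.InjOn (fun p => (J p).card) t := by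
      intro p hp q hq heq
      simp only [Finset.mem_coe, ht, Finset.mem_filter] at hp hq
      rcases lt_trichotomy p.1 q.1 with h | h | h
      · exact absurd heq (Nat.ne_of_lt (keyinj p hp.1 q hq.1 (hp.2.trans hq.2.symm) h))
      · have hb : p.2 = q.2 := by
          have h1 : r p.1 + p.2 = r q.1 + q.2 := hp.2.trans hq.2.symm
          rw [h] at h1
          linarith
        exact Prod.ext h hb
      · exact absurd heq.symm
          (Nat.ne_of_lt (keyinj q hq.1 p hp.1 (hq.2.trans hp.2.symm) h))
    have himg : t.card = (t.image (fun p => (J p).card)).card :=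
      (Finset.card_image_of_injOn hinj).symm
    have hsum : (∑ x ∈ t.image (fun p => (J p).card), x) = ∑ p ∈ t, (J p).card :=
      Finset.sum_image (fun p hp q hq => hinj hp hq)
    have hone : ∀ x ∈ t.image (fun p => (J p).card), 1 ≤ x := by
      intro x hx
      rw [Finset.mem_image] at hx
      obtain ⟨p, hp, rfl⟩ := hx
      exact hJpos p (htT hp)
    calc t.card ^ 2 = (t.image (fun p => (J p).card)).card ^ 2 := by rw [himg]
      _ ≤ 2 * ∑ x ∈ t.image (fun p => (J p).card), x :=
          nat_card_sq_le_two_mul_sum _ hone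
      _ = 2 * ∑ p ∈ t, (J p).card := by rw [hsum]
  have hsum_sq : (∑ u ∈ S, (T.filter (fun p => g p = u)).card ^ 2) ≤ 2 * (n * N) := by
    calc (∑ u ∈ S, (T.filter (fun p => g p = u)).card ^ 2)
        ≤ ∑ u ∈ S, 2 * ∑ p ∈ T.filter (fun p => g p = u), (J p).card :=
          Finset.sum_le_sum hfib_sq
      _ = 2 * ∑ u ∈ S, ∑ p ∈ T.filter (fun p => g p = u), (J p).card := by
          rw [Finset.mul_sum]
      _ = 2 * ∑ p ∈ T, (J p).card := by
          rw [Finset.sum_fiberwise_of_maps_to hgS]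
      _ ≤ 2 * (n * N) := by omega
  -- Cauchy–Schwarz
  have hCS : (D.card * n) ^ 2 ≤ N * (2 * (n * N)) := by
    calc (D.card * n) ^ 2
        = (∑ u ∈ S, (T.filter (fun p => g p = u)).card) ^ 2 := by rw [hfibcard]
      _ ≤ S.card * ∑ u ∈ S, (T.filter (fun p => g p = u)).card ^ 2 :=
          sq_sum_le_card_mul_sum_sq
      _ ≤ N * (2 * (n * N)) := by
          rw [← hN]
          exact Nat.mul_le_mul_left N hsum_sq
  -- pass to the reals
  have hreal : ((D.card : ℝ) * n) ^ 2 ≤ (2 * n) * N ^ 2 := by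
    have := hCS
    have h2 : ((D.card * n) ^ 2 : ℝ) ≤ (N * (2 * (n * N)) : ℕ) := by
      exact_mod_cast Nat.cast_le.2 this
    push_cast at h2 ⊢
    nlinarith [h2]
  have hnn : (0:ℝ) ≤ (D.card : ℝ) * n := by positivity
  have hmain : (D.card : ℝ) * n ≤ Real.sqrt (2 * n) * N := by
    have h1 : (D.card : ℝ) * n = Real.sqrt (((D.card : ℝ) * n) ^ 2) := by
      rw [Real.sqrt_sq hnn]
    rw [h1]
    calc Real.sqrt (((D.card : ℝ) * n) ^ 2)
        ≤ Real.sqrt ((2 * n) * N ^ 2) := Real.sqrt_le_sqrt hreal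
      _ = Real.sqrt (2 * n) * Real.sqrt (N ^ 2) := Real.sqrt_mul (by positivity) _
      _ = Real.sqrt (2 * n) * N := by rw [Real.sqrt_sq (Nat.cast_nonneg N)]
  have hnR : (0:ℝ) < (n : ℝ) := by exact_mod_cast hnpos
  have : (D.card : ℝ) ≤ Real.sqrt (2 * n) * N / n := by
    rw [le_div_iff₀ hnR]
    exact hmain
  calc (D.card : ℝ) ≤ Real.sqrt (2 * n) * N / n := this
    _ ≤ Real.sqrt (2 * n) * N / n + 1 := by linarith
end

section
/- Let α be an irrational real number, N ≥ 1 an integer, and S_α(N) := {{αn} : 1 ≤ n ≤ N} ⊂ [0,1). Let A be any nonempty subset of S_α(N), with elements listed in increasing order as a_1 < a_2 < … < a_m, and set a_{m+1} := 1 + a_1. Then |{a_{j+1} − a_j : 1 ≤ j ≤ m}| ≤ 2√(2N) + 1. -/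
open Finset

private lemma fract_window_eq {a b c : ℝ} (h : Int.fract a = Int.fract b)
    (ha1 : c ≤ a) (ha2 : a < c + 1) (hb1 : c ≤ b) (hb2 : b < c + 1) : a = b := by
  obtain ⟨z, hz⟩ := Int.fract_eq_fract.mp h
  have h1 : (z : ℝ) < 1 := by linarith
  have h2 : (-1 : ℝ) < z := by linarith
  have h1' : z < 1 := by exact_mod_cast h1
  have h2' : -1 < z := by exact_mod_cast h2
  have hz0 : z = 0 := by omega
  rw [hz0] at hz
  push_cast at hz
  linarith

def IsArcQ (A : Finset ℝ) (hA : A.Nonempty) (v x z : ℝ) : Prop :=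
  x ∈ A ∧ z ∈ A ∧
    ((x + v = z ∧ ∀ c ∈ A, c ≤ x ∨ z ≤ c) ∨
     (x = A.max' hA ∧ z = A.min' hA ∧ x + v = 1 + z))

private lemma arcs_disj {A : Finset ℝ} {hA : A.Nonempty} {v w x z x' z' L : ℝ}
    (h : IsArcQ A hA v x z) (h' : IsArcQ A hA w x' z') (hvw : v ≠ w)
    (h1 : x < L) (h2 : L < x + v) (h3 : x' < L) (h4 : L < x' + w) : False := by
  obtain ⟨hxA, hzA, hc⟩ := h
  obtain ⟨hxA', hzA', hc'⟩ := h'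
  rcases hc with ⟨hz, hmid⟩ | ⟨hxm, hzm, hv1⟩
  · rcases hc' with ⟨hz', hmid'⟩ | ⟨hxm', hzm', hv1'⟩
    · rcases lt_trichotomy x x' with hlt | heq | hgt
      · rcases hmid x' hxA' with h5 | h5 <;> linarith
      · rcases lt_trichotomy z z' with hlt2 | heq2 | hgt2
        · rcases hmid' z hzA with h5 | h5 <;> linarith
        · exact hvw (by linarith)
        · rcases hmid z' hzA' with h5 | h5 <;> linarith
      · rcases hmid' x hxA with h5 | h5 <;> linarith
    · have hzle : z ≤ A.max' hA := A.le_max' z hzA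
      rw [← hxm'] at hzle
      linarith
  · rcases hc' with ⟨hz', hmid'⟩ | ⟨hxm', hzm', hv1'⟩
    · have hzle : z' ≤ A.max' hA := A.le_max' z' hzA'
      rw [← hxm] at hzle
      linarith
    · have ex : x = x' := by rw [hxm, hxm']
      have ez : z = z' := by rw [hzm, hzm']
      exact hvw (by linarith)

private lemma consecDiffs_spec {A : Finset ℝ} {v : ℝ} (hv : v ∈ consecDiffs A) :
    ∃ x z : ℝ, x ∈ A ∧ z ∈ A ∧ x < z ∧ z - x = v ∧ ∀ c ∈ A, c ≤ x ∨ z ≤ c := by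
  unfold consecDiffs at hv
  rw [List.mem_toFinset] at hv
  obtain ⟨i, hi, hveq⟩ := List.mem_iff_getElem.mp hv
  set l := A.sort (· ≤ ·) with hl
  have hlen : i + 1 < l.length := by
    rw [List.length_zipWith, List.length_tail] at hi
    omega
  have hitail : i < l.tail.length := by rw [List.length_tail]; omega
  have hget : (List.zipWith (fun x y => y - x) l l.tail)[i] = l[i+1] - l[i] := by
    rw [List.getElem_zipWith]
    congr 1
    exact List.getElem_tail _
  have hs : List.Pairwise (· < ·) l := (Finset.sortedLT_sort A).pairwise
  have hpw := List.pairwise_iff_getElem.mp hs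
  refine ⟨l[i], l[i+1], ?_, ?_, ?_, ?_, ?_⟩
  · exact (Finset.mem_sort (fun x1 x2 : ℝ => x1 ≤ x2)).mp (List.getElem_mem _)
  · exact (Finset.mem_sort (fun x1 x2 : ℝ => x1 ≤ x2)).mp (List.getElem_mem _)
  · exact hpw i (i+1) (by omega) hlen (by omega)
  · rw [← hveq, hget]
  · intro c hc
    obtain ⟨j, hj, hjc⟩ := List.mem_iff_getElem.mp ((Finset.mem_sort (fun x1 x2 : ℝ => x1 ≤ x2)).mpr hc)
    rw [← hjc]
    rcases Nat.lt_or_ge j (i+1) with hj2 | hj2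
    · left
      rcases Nat.lt_or_ge j i with hj3 | hj3
      · exact le_of_lt (hpw j i hj (by omega) hj3)
      · have : j = i := by omega
        subst this; exact le_refl _
    · right
      rcases Nat.lt_or_ge (i+1) j with hj3 | hj3
      · exact le_of_lt (hpw (i+1) j hlen hj hj3)
      · have : j = i + 1 := by omega
        subst this; exact le_refl _

theorem circular_gaps_of_subset_le (α : ℝ) (hα : Irrational α) (N : ℕ) (hN : 1 ≤ N)
    (A : Finset ℝ) (hA : A.Nonempty)
    (hAS : A ⊆ (Finset.Icc 1 N).image fun n : ℕ => Int.fract (α * n)) :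
    (((consecDiffs A) ∪ {1 + A.min' hA - A.max' hA}).card : ℝ) ≤
      2 * Real.sqrt (2 * N) + 1 := by
  classical
  have hA01 : ∀ a ∈ A, 0 ≤ a ∧ a < 1 := by
    intro a ha
    obtain ⟨k, _, rfl⟩ := Finset.mem_image.mp (hAS ha)
    exact ⟨Int.fract_nonneg _, Int.fract_lt_one _⟩
  have hsqrt0 : (0:ℝ) ≤ Real.sqrt (2 * N) := Real.sqrt_nonneg _
  rcases Nat.lt_or_ge 1 A.card with hcard | hcard
  swap
  · -- |A| = 1
    have hA1 : A.card = 1 := le_antisymm hcard (Finset.card_pos.mpr hA)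
    obtain ⟨a, rfl⟩ := Finset.card_eq_one.mp hA1
    have hcd : consecDiffs {a} = ∅ := by
      unfold consecDiffs
      rw [Finset.sort_singleton]
      simp
    rw [hcd]
    simp only [Finset.empty_union, Finset.card_singleton, Nat.cast_one]
    linarith
  -- main case
  have hminmem := A.min'_mem hA
  have hmaxmem := A.max'_mem hA
  have hmin0 : 0 ≤ A.min' hA := (hA01 _ hminmem).1
  have hmax1 : A.max' hA < 1 := (hA01 _ hmaxmem).2
  have hminmax : A.min' hA < A.max' hA := Finset.min'_lt_max'_of_card A hcard
  set V : Finset ℝ := consecDiffs A ∪ {1 + A.min' hA - A.max' hA} with hVdef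
  have hwrapmem : (1 + A.min' hA - A.max' hA) ∈ V :=
    Finset.mem_union_right _ (Finset.mem_singleton_self _)
  have hVpos : ∀ v ∈ V, 0 < v ∧ v < 1 := by
    intro v hv
    rcases Finset.mem_union.mp hv with h | h
    · obtain ⟨x, z, hx, hz, hlt, heq, -⟩ := consecDiffs_spec h
      have h1 := hA01 x hx
      have h2 := hA01 z hz
      constructor <;> linarith
    · rw [Finset.mem_singleton] at h
      subst h
      constructor <;> linarith
  have harc : ∀ v ∈ V, ∃ x z : ℝ, IsArcQ A hA v x z := by
    intro v hv
    rcases Finset.mem_union.mp hv with h | h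
    · obtain ⟨x, z, hx, hz, hlt, heq, hmid⟩ := consecDiffs_spec h
      exact ⟨x, z, hx, hz, Or.inl ⟨by linarith, hmid⟩⟩
    · rw [Finset.mem_singleton] at h
      refine ⟨A.max' hA, A.min' hA, hmaxmem, hminmem, Or.inr ⟨rfl, rfl, by rw [h]; ring⟩⟩
  choose! xf zf hQ using harc
  have hxA : ∀ v ∈ V, xf v ∈ A := fun v hv => (hQ v hv).1
  have hzA : ∀ v ∈ V, zf v ∈ A := fun v hv => (hQ v hv).2.1
  have hδ : ∀ v ∈ V, xf v + v - zf v = 0 ∨ xf v + v - zf v = 1 := by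
    intro v hv
    rcases (hQ v hv).2.2 with ⟨h, -⟩ | ⟨-, -, h⟩
    · left; linarith
    · right; linarith
  have hub : ∀ v ∈ V, xf v + v ≤ 1 + A.min' hA := by
    intro v hv
    rcases (hQ v hv).2.2 with ⟨hzeq, -⟩ | ⟨-, hzm, hveq⟩
    · have h1 : zf v ≤ A.max' hA := A.le_max' _ (hzA v hv)
      linarith
    · rw [hzm] at hveq; linarith
  have hlb : ∀ v ∈ V, A.min' hA ≤ xf v := fun v hv => A.min'_le _ (hxA v hv)
  -- index function
  have hidx0 : ∀ a ∈ A, ∃ k : ℕ, (1 ≤ k ∧ k ≤ N) ∧ Int.fract (α * k) = a := by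
    intro a ha
    obtain ⟨k, hk, he⟩ := Finset.mem_image.mp (hAS ha)
    exact ⟨k, Finset.mem_Icc.mp hk, he⟩
  choose! idx hidxb hidxf using hidx0
  set d : ℝ → ℤ := fun v => (idx (zf v) : ℤ) - (idx (xf v) : ℤ) with hd_def
  set F : ℝ × ℝ → ℤ := fun q =>
    if (idx (xf q.2) : ℤ) + d q.1 ≤ (N : ℤ) then (idx (xf q.2) : ℤ) + d q.1
    else (idx (zf q.2) : ℤ) - d q.1 with hF_def
  have hfd : ∀ v ∈ V, Int.fract (α * ((d v : ℤ) : ℝ)) = v := by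
    intro v hv
    have hx := hidxf _ (hxA v hv)
    have hz := hidxf _ (hzA v hv)
    have hpos := hVpos v hv
    have e1 := Int.self_sub_fract (α * ((idx (zf v) : ℕ) : ℝ))
    have e2 := Int.self_sub_fract (α * ((idx (xf v) : ℕ) : ℝ))
    rw [hz] at e1
    rw [hx] at e2
    have hfr : Int.fract (α * ((d v : ℤ) : ℝ)) = Int.fract v := by
      rw [Int.fract_eq_fract]
      rcases hδ v hv with h | h
      · refine ⟨⌊α * ((idx (zf v) : ℕ) : ℝ)⌋ - ⌊α * ((idx (xf v) : ℕ) : ℝ)⌋, ?_⟩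
        simp only [hd_def]
        push_cast
        linarith
      · refine ⟨⌊α * ((idx (zf v) : ℕ) : ℝ)⌋ - ⌊α * ((idx (xf v) : ℕ) : ℝ)⌋ - 1, ?_⟩
        simp only [hd_def]
        push_cast
        linarith
    rw [hfr, Int.fract_eq_self.mpr ⟨le_of_lt hpos.1, hpos.2⟩]
  have hd_bounds : ∀ v ∈ V, 1 - (N : ℤ) ≤ d v ∧ d v ≤ (N : ℤ) - 1 := by
    intro v hv
    have h1 := hidxb _ (hxA v hv)
    have h2 := hidxb _ (hzA v hv)
    simp only [hd_def]
    omega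
  set P : Finset (ℝ × ℝ) := V.offDiag.filter (fun q => q.1 < q.2) with hP_def
  have hPmem : ∀ q ∈ P, q.1 ∈ V ∧ q.2 ∈ V ∧ q.1 < q.2 := by
    intro q hq
    have h1 := Finset.mem_filter.mp hq
    have h2 := Finset.mem_offDiag.mp h1.1
    exact ⟨h2.1, h2.2.1, h1.2⟩
  have hcharge : ∀ q ∈ P, (F q ∈ Finset.Icc (1 - (N : ℤ)) (N : ℤ)) ∧
      ∃ o : ℝ, (o = q.1 ∨ o = q.2 - q.1) ∧ 0 < o ∧ o < q.2 ∧
        Int.fract (α * ((F q : ℤ) : ℝ)) = Int.fract (xf q.2 + o) := by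
    intro q hq
    obtain ⟨hu, hv, hlt⟩ := hPmem q hq
    have hdb := hd_bounds q.1 hu
    have hmx := hidxb _ (hxA q.2 hv)
    have hmz := hidxb _ (hzA q.2 hv)
    have hxm := hidxf _ (hxA q.2 hv)
    have hzm := hidxf _ (hzA q.2 hv)
    have hfu := hfd q.1 hu
    have hup := hVpos q.1 hu
    have hvp := hVpos q.2 hv
    simp only [hF_def]
    split_ifs with hif
    · constructor
      · rw [Finset.mem_Icc]
        omega
      · refine ⟨q.1, Or.inl rfl, hup.1, hlt, ?_⟩
        rw [Int.fract_eq_fract]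
        refine ⟨⌊α * ((idx (xf q.2) : ℕ) : ℝ)⌋ + ⌊α * ((d q.1 : ℤ) : ℝ)⌋, ?_⟩
        have e1 := Int.self_sub_fract (α * ((idx (xf q.2) : ℕ) : ℝ))
        have e2 := Int.self_sub_fract (α * ((d q.1 : ℤ) : ℝ))
        rw [hxm] at e1
        rw [hfu] at e2
        push_cast
        linarith
    · constructor
      · rw [Finset.mem_Icc]
        omega
      · refine ⟨q.2 - q.1, Or.inr rfl, by linarith, by linarith, ?_⟩
        rw [Int.fract_eq_fract]
        have e1 := Int.self_sub_fract (α * ((idx (zf q.2) : ℕ) : ℝ))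
        have e2 := Int.self_sub_fract (α * ((d q.1 : ℤ) : ℝ))
        rw [hzm] at e1
        rw [hfu] at e2
        rcases hδ q.2 hv with h | h
        · refine ⟨⌊α * ((idx (zf q.2) : ℕ) : ℝ)⌋ - ⌊α * ((d q.1 : ℤ) : ℝ)⌋, ?_⟩
          push_cast
          linarith
        · refine ⟨⌊α * ((idx (zf q.2) : ℕ) : ℝ)⌋ - ⌊α * ((d q.1 : ℤ) : ℝ)⌋ - 1, ?_⟩
          push_cast
          linarith
  have hfiber : ∀ t ∈ P.image F, (P.filter (fun q => F q = t)).card ≤ 2 := by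
    intro t ht
    rcases Finset.eq_empty_or_nonempty (P.filter (fun q => F q = t)) with he | hne
    · rw [he]; simp
    · obtain ⟨q0, hq0⟩ := hne
      have hq0P : q0 ∈ P := (Finset.mem_filter.mp hq0).1
      have hq0f : F q0 = t := (Finset.mem_filter.mp hq0).2
      obtain ⟨-, o0, ho0eq, ho0pos, ho0lt, ho0f⟩ := hcharge q0 hq0P
      obtain ⟨hu0, hv0, hlt0⟩ := hPmem q0 hq0P
      have hsub : P.filter (fun q => F q = t) ⊆ {(o0, q0.2), (q0.2 - o0, q0.2)} := by
        intro q hq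
        have hqP : q ∈ P := (Finset.mem_filter.mp hq).1
        have hqf : F q = t := (Finset.mem_filter.mp hq).2
        obtain ⟨-, o, hoeq, hopos, holt, hof⟩ := hcharge q hqP
        obtain ⟨hu, hv, hlt⟩ := hPmem q hqP
        have hfr : Int.fract (xf q.2 + o) = Int.fract (xf q0.2 + o0) := by
          rw [← hof, ← ho0f, hqf, hq0f]
        have hL : xf q.2 + o = xf q0.2 + o0 := by
          apply fract_window_eq (c := A.min' hA) hfr
          · linarith [hlb q.2 hv]
          · linarith [hub q.2 hv]
          · linarith [hlb q0.2 hv0]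
          · linarith [hub q0.2 hv0]
        have hv2 : q.2 = q0.2 := by
          by_contra hne2
          exact arcs_disj (L := xf q.2 + o) (hQ q.2 hv) (hQ q0.2 hv0) hne2 (by linarith) (by linarith)
            (by linarith) (by linarith)
        rw [hv2] at hL
        have hoo : o = o0 := by linarith
        rw [Finset.mem_insert, Finset.mem_singleton]
        rcases hoeq with h | h
        · left
          rw [Prod.ext_iff]
          exact ⟨by rw [← hoo, ← h], hv2⟩
        · right
          rw [Prod.ext_iff]
          constructor
          · show q.1 = q0.2 - o0
            rw [← hv2]
            linarith
          · exact hv2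
      exact (Finset.card_le_card hsub).trans
        ((Finset.card_insert_le _ _).trans (by simp))
  have hcount : P.card ≤ 2 * (2 * N) := by
    have h1 : P.card ≤ 2 * (P.image F).card := Finset.card_le_mul_card_image P 2 hfiber
    have h2 : (P.image F).card ≤ (Finset.Icc (1 - (N : ℤ)) (N : ℤ)).card := by
      apply Finset.card_le_card
      intro t ht
      obtain ⟨q, hq, rfl⟩ := Finset.mem_image.mp ht
      exact (hcharge q hq).1
    have h3 : (Finset.Icc (1 - (N : ℤ)) (N : ℤ)).card = 2 * N := by
      rw [Int.card_Icc]
      omega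
    omega
  have hPP' : V.offDiag.card = 2 * P.card := by
    have hunion : P ∪ V.offDiag.filter (fun q => q.2 < q.1) = V.offDiag := by
      simp only [hP_def]
      rw [← Finset.filter_or]
      apply Finset.filter_true_of_mem
      intro q hq
      exact lt_or_gt_of_ne (Finset.mem_offDiag.mp hq).2.2
    have hdisj : Disjoint P (V.offDiag.filter (fun q => q.2 < q.1)) := by
      rw [Finset.disjoint_left]
      intro q h1 h2
      exact absurd (Finset.mem_filter.mp h2).2
        (not_lt.mpr (le_of_lt (Finset.mem_filter.mp h1).2))
    have hswap : V.offDiag.filter (fun q => q.2 < q.1) = P.image Prod.swap := by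
      ext q
      simp only [Finset.mem_image, Finset.mem_filter, Finset.mem_offDiag, hP_def]
      constructor
      · rintro ⟨⟨h1, h2, h3⟩, h4⟩
        exact ⟨q.swap, ⟨⟨h2, h1, Ne.symm h3⟩, h4⟩, Prod.swap_swap q⟩
      · rintro ⟨p, ⟨⟨h1, h2, h3⟩, h4⟩, rfl⟩
        exact ⟨⟨h2, h1, Ne.symm h3⟩, h4⟩
    rw [← hunion, Finset.card_union_of_disjoint hdisj, hswap,
      Finset.card_image_of_injective _ Prod.swap_injective]
    ring
  have hDD : V.card * V.card - V.card ≤ 8 * N := by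
    have h0 := Finset.offDiag_card (s := V)
    omega
  -- final arithmetic
  have hD1 : 1 ≤ V.card := Finset.card_pos.mpr ⟨_, hwrapmem⟩
  have hDle : V.card ≤ V.card * V.card := Nat.le_mul_of_pos_left _ (by omega)
  have hreal : (V.card : ℝ) * (V.card : ℝ) - (V.card : ℝ) ≤ 8 * N := by
    have := hDD
    have hc : ((V.card * V.card - V.card : ℕ) : ℝ) = (V.card : ℝ) * V.card - V.card := by
      push_cast [Nat.cast_sub hDle]
      ring
    calc (V.card : ℝ) * (V.card : ℝ) - (V.card : ℝ)
        = ((V.card * V.card - V.card : ℕ) : ℝ) := hc.symm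
      _ ≤ ((8 * N : ℕ) : ℝ) := by exact_mod_cast this
      _ = 8 * N := by push_cast; ring
  have hsq : Real.sqrt (2 * N) ^ 2 = 2 * N := Real.sq_sqrt (by positivity)
  have hD1' : (1 : ℝ) ≤ (V.card : ℝ) := by exact_mod_cast hD1
  nlinarith [sq_nonneg ((V.card : ℝ) - 1 - 2 * Real.sqrt (2 * N)),
    sq_nonneg ((V.card : ℝ) - 1 + 2 * Real.sqrt (2 * N)), hsqrt0, hsq, hreal, hD1']
end

section
/- (Three Gaps theorem) Let α be an irrational real number and N ≥ 1 an integer. List the fractional parts {α·1}, {α·2}, …, {α·N} in increasing order as b_1 < b_2 < … < b_N. Then every consecutive difference b_{i+1} − b_i (for 1 ≤ i ≤ N−1) is equal to one of the three numbers b_1, 1 − b_N, or b_1 + 1 − b_N. In particular, |{b_{i+1} − b_i : 1 ≤ i ≤ N−1}| ≤ 3. -/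
open Finset

lemma tg_inj {α : ℝ} (hα : Irrational α) {u v : ℤ}
    (h : Int.fract (α * u) = Int.fract (α * v)) : u = v := by
  by_contra hne
  have h2 : α * u - ⌊α * (u:ℝ)⌋ = α * v - ⌊α * (v:ℝ)⌋ := h
  have h3 : ((u - v : ℤ) : ℝ) * α = ((⌊α * (u:ℝ)⌋ - ⌊α * (v:ℝ)⌋ : ℤ) : ℝ) := by
    push_cast; linarith
  exact (hα.intCast_mul (sub_ne_zero.mpr hne)).ne_int _ h3

lemma tg_pos {α : ℝ} (hα : Irrational α) {j : ℤ} (hj : j ≠ 0) :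
    0 < Int.fract (α * j) := by
  rcases lt_or_eq_of_le (Int.fract_nonneg (α * j)) with h | h
  · exact h
  · exfalso
    apply hj
    have : Int.fract (α * (j:ℤ)) = Int.fract (α * ((0:ℤ):ℝ)) := by
      simp [← h]
    exact tg_inj hα this

lemma tg_lt_one (α : ℝ) (j : ℤ) : Int.fract (α * j) < 1 := Int.fract_lt_one _

lemma tg_add (α : ℝ) (u v : ℤ) :
    Int.fract (α * (u + v : ℤ)) = Int.fract (α * u) + Int.fract (α * v) ∨
    Int.fract (α * (u + v : ℤ)) = Int.fract (α * u) + Int.fract (α * v) - 1 := by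
  have h1 : α * ((u + v : ℤ) : ℝ) =
      (Int.fract (α * u) + Int.fract (α * v)) + ((⌊α * (u:ℝ)⌋ + ⌊α * (v:ℝ)⌋ : ℤ) : ℝ) := by
    have hu : Int.fract (α * (u:ℝ)) = α * u - ⌊α * (u:ℝ)⌋ := rfl
    have hv : Int.fract (α * (v:ℝ)) = α * v - ⌊α * (v:ℝ)⌋ := rfl
    push_cast; rw [hu, hv]; ring
  rw [h1, Int.fract_add_intCast]
  set s := Int.fract (α * u) + Int.fract (α * v) with hs
  have h0 : 0 ≤ s := add_nonneg (Int.fract_nonneg _) (Int.fract_nonneg _)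
  have h2 : s < 2 := by
    have := Int.fract_lt_one (α * (u:ℝ)); have := Int.fract_lt_one (α * (v:ℝ)); linarith
  by_cases hlt : s < 1
  · left; exact Int.fract_eq_self.mpr ⟨h0, hlt⟩
  · right
    have : Int.fract s = Int.fract (s - 1) := by
      rw [show s - 1 = s + (-1 : ℤ) by push_cast; ring, Int.fract_add_intCast]
    rw [this]
    exact Int.fract_eq_self.mpr ⟨by linarith, by linarith⟩

lemma tg_neg {α : ℝ} (hα : Irrational α) {j : ℤ} (hj : j ≠ 0) :
    Int.fract (α * (-j : ℤ)) = 1 - Int.fract (α * j) := by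
  have h0 : Int.fract (α * ((j + -j : ℤ) : ℝ)) = 0 := by norm_num
  rcases tg_add α j (-j) with h | h
  · exfalso
    have := tg_pos hα hj
    have := tg_pos hα (neg_ne_zero.mpr hj)
    rw [h0] at h; linarith
  · rw [h0] at h; linarith

lemma tg_core {α : ℝ} (hα : Irrational α) {N a b m k : ℤ}
    (ha1 : 1 ≤ a) (haN : a ≤ N) (hb1 : 1 ≤ b) (hbN : b ≤ N)
    (hm1 : 1 ≤ m) (hmN : m ≤ N)
    (hk0 : k ≠ 0) (hk1 : 1 ≤ m + k) (hkN : m + k ≤ N)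
    (minA : ∀ j : ℤ, 1 ≤ j → j ≤ N → Int.fract (α * a) ≤ Int.fract (α * j))
    (maxB : ∀ j : ℤ, 1 ≤ j → j ≤ N → Int.fract (α * j) ≤ Int.fract (α * b))
    (hAB : Int.fract (α * a) < Int.fract (α * b))
    (hadj : ∀ j : ℤ, j ≠ 0 → 1 ≤ m + j → m + j ≤ N →
      Int.fract (α * k) ≤ Int.fract (α * j)) :
    Int.fract (α * k) = Int.fract (α * a) ∨
      Int.fract (α * k) = 1 - Int.fract (α * b) ∨
      Int.fract (α * k) = Int.fract (α * a) + (1 - Int.fract (α * b)) := by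
  set A := Int.fract (α * a) with hA
  set B := Int.fract (α * b) with hB
  have hApos : 0 < A := tg_pos hα (by omega)
  have hBlt1 : B < 1 := tg_lt_one α b
  -- strict versions
  have minA' : ∀ j : ℤ, 1 ≤ j → j ≤ N → j ≠ a → A < Int.fract (α * j) := by
    intro j h1 h2 hja
    exact lt_of_le_of_ne (minA j h1 h2) (fun h => hja (tg_inj hα h.symm))
  have maxB' : ∀ j : ℤ, 1 ≤ j → j ≤ N → j ≠ b → Int.fract (α * j) < B := by
    intro j h1 h2 hjb
    exact lt_of_le_of_ne (maxB j h1 h2) (fun h => hjb (tg_inj hα h))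
  have hab : a ≠ b := fun h => by rw [hA, hB, h] at hAB; exact lt_irrefl _ hAB
  by_cases hCaseA : m + a ≤ N
  · -- gap ≤ A
    have hup : Int.fract (α * k) ≤ A := hadj a (by omega) (by omega) hCaseA
    rcases lt_or_gt_of_ne hk0 with hkneg | hkpos
    · -- k < 0 : let i = -k
      set i := -k with hi
      have hi1 : 1 ≤ i := by omega
      have hiN : i ≤ N := by omega
      have hkeq : Int.fract (α * k) = 1 - Int.fract (α * i) := by
        rw [show k = -i by omega]; exact tg_neg hα (by omega)
      by_cases hbm : b + 1 ≤ m
      · -- also gap ≤ 1 - B, and ≥ 1 - B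
        have h1 : Int.fract (α * k) ≤ 1 - B := by
          have := hadj (-b) (by omega) (by omega) (by omega)
          rwa [tg_neg hα (by omega)] at this
        have h2 : 1 - B ≤ Int.fract (α * k) := by
          rw [hkeq]; have := maxB i hi1 hiN; linarith
        right; left; linarith
      · -- b ≥ m > i, contradiction
        exfalso
        have hiaN : i + a ≤ N := by omega
        have hia1 : 1 ≤ i + a := by omega
        have hge : 1 - A ≤ Int.fract (α * i) := by rw [hkeq] at hup; linarith
        have hlow : A ≤ Int.fract (α * (i + a : ℤ)) := minA _ hia1 hiaN
        have hhi : Int.fract (α * (i + a : ℤ)) < 1 := tg_lt_one α _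
        have hilt : Int.fract (α * i) < 1 := tg_lt_one α i
        rcases tg_add α i a with h | h
    <;> rw [h] at hlow hhi <;> linarith
    · -- k > 0 : gap = A
      left
      have := minA k (by omega) (by omega)
      linarith
  · by_cases hbm : b + 1 ≤ m
    · -- Case B : gap ≤ 1 - B
      have hup : Int.fract (α * k) ≤ 1 - B := by
        have := hadj (-b) (by omega) (by omega) (by omega)
        rwa [tg_neg hα (by omega)] at this
      rcases lt_or_gt_of_ne hk0 with hkneg | hkpos
      · set i := -k with hi
        have hkeq : Int.fract (α * k) = 1 - Int.fract (α * i) := by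
          rw [show k = -i by omega]; exact tg_neg hα (by omega)
        have h2 : 1 - B ≤ Int.fract (α * k) := by
          rw [hkeq]; have := maxB i (by omega) (by omega); linarith
        right; left; linarith
      · -- k > 0 : contradiction via k + b
        exfalso
        have hkbN : k + b ≤ N := by omega
        have hkpos' : 0 < Int.fract (α * k) := tg_pos hα hk0
        have hkbpos : 0 < Int.fract (α * (k + b : ℤ)) := tg_pos hα (by omega)
        have hkble : Int.fract (α * (k + b : ℤ)) ≤ B := maxB _ (by omega) hkbN
        rcases tg_add α k b with h | h <;> rw [h] at hkble hkbpos <;> linarith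
    · -- Case C : gap = A + (1 - B)
      right; right
      have hj0 : Int.fract (α * (a - b : ℤ)) = A + (1 - B) := by
        have hq := tg_add α (a - b) b
        rw [show a - b + b = a by ring] at hq
        have hp : 0 < Int.fract (α * (a - b : ℤ)) := tg_pos hα (by omega)
        rcases hq with h | h
        · linarith
        · linarith
      have hup : Int.fract (α * k) ≤ A + (1 - B) := by
        have := hadj (a - b) (by omega) (by omega) (by omega)
        rwa [hj0] at this
      rcases lt_or_gt_of_ne hk0 with hkneg | hkpos
      · -- k < 0
        set i := -k with hi
        have hib : i ≠ b := by omega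
        have hkeq : Int.fract (α * k) = 1 - Int.fract (α * i) := by
          rw [show k = -i by omega]; exact tg_neg hα (by omega)
        -- b - i ∈ [1, N]
        have h1 : 1 ≤ b - i := by omega
        have h2 : b - i ≤ N := by omega
        have hbi := tg_add α (b - i) i
        rw [show b - i + i = b by ring] at hbi
        have hilt : Int.fract (α * i) < B := maxB' i (by omega) (by omega) hib
        have hbiA : A ≤ Int.fract (α * (b - i : ℤ)) := minA _ h1 h2
        have hbilt : Int.fract (α * (b - i : ℤ)) < 1 := tg_lt_one α _
        rcases hbi with h | h
        · rw [hkeq]; linarith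
        · linarith
      · -- k > 0
        have hka : k ≠ a := by omega
        have hkA : A < Int.fract (α * k) := minA' k (by omega) (by omega) hka
        have h1 : 1 ≤ a - k := by omega
        have h2 : a - k ≤ N := by omega
        have hak := tg_add α (a - k) k
        rw [show a - k + k = a by ring] at hak
        have hakpos : 0 < Int.fract (α * (a - k : ℤ)) := tg_pos hα (by omega)
        have hakle : Int.fract (α * (a - k : ℤ)) ≤ B := maxB _ h1 h2
        rcases hak with h | h
        · linarith
        · linarith

lemma tg_cast (α : ℝ) (n : ℕ) : Int.fract (α * ((n : ℤ) : ℝ)) = Int.fract (α * (n : ℝ)) := by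
  norm_cast

/-- The Three Gaps (Steinhaus) theorem: every gap between consecutive
fractional parts `{αn}`, `1 ≤ n ≤ N`, is one of three numbers, namely
`b₁`, `1 - b_N`, or `b₁ + 1 - b_N`, where `b₁` and `b_N` are the smallest
and the largest of these fractional parts.  In particular there are at
most `3` distinct consecutive differences. -/
theorem three_gaps (α : ℝ) (hα : Irrational α) (N : ℕ) (hN : 1 ≤ N)
    (S : Finset ℝ) (hSdef : S = (Finset.Icc 1 N).image fun n : ℕ => Int.fract (α * n))
    (hS : S.Nonempty) :
    (∀ d ∈ consecDiffs S,
        d = S.min' hS ∨ d = 1 - S.max' hS ∨ d = S.min' hS + (1 - S.max' hS)) ∧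
      (consecDiffs S).card ≤ 3 := by
  have key : ∀ d ∈ consecDiffs S,
      d = S.min' hS ∨ d = 1 - S.max' hS ∨ d = S.min' hS + (1 - S.max' hS) := by
    intro d hd
    classical
    rw [consecDiffs, List.mem_toFinset, List.mem_iff_getElem] at hd
    obtain ⟨i, hilen, hdi⟩ := hd
    rw [List.length_zipWith, List.length_tail, lt_min_iff] at hilen
    set l := S.sort (· ≤ ·) with hl
    have hi1 : i + 1 < l.length := by omega
    have hii : i < l.length := by omega
    rw [List.getElem_zipWith, List.getElem_tail] at hdi
    set x := l[i] with hx
    set y := l[i + 1] with hy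
    -- membership in S
    have hmemS : ∀ (j : ℕ) (hj : j < l.length), l[j] ∈ S := by
      intro j hj
      exact (Finset.mem_sort (α := ℝ) (· ≤ ·)).mp (List.getElem_mem hj)
    have hxS : x ∈ S := hmemS i hii
    have hyS : y ∈ S := hmemS (i + 1) hi1
    -- strict sortedness
    have hpw := List.pairwise_iff_getElem.mp (S.sortedLT_sort).pairwise
    have hxy : x < y := hpw i (i + 1) hii hi1 (by omega)
    -- adjacency
    have hadjS : ∀ z ∈ S, x < z → y ≤ z := by
      intro z hz hlt
      obtain ⟨j, hj, rfl⟩ := List.mem_iff_getElem.mp ((Finset.mem_sort (α := ℝ) (· ≤ ·)).mpr hz)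
      rcases lt_trichotomy j (i + 1) with h | h | h
      · exfalso
        rcases lt_or_eq_of_le (Nat.lt_succ_iff.mp h) with h' | h'
        · exact absurd (hpw j i hj hii h') (by rw [← hx]; exact not_lt.mpr hlt.le)
        · subst h'; exact lt_irrefl _ (hx ▸ hlt)
      · subst h; exact le_refl _
      · exact (hpw (i + 1) j hi1 hj h).le
    -- representatives
    have hxrep : ∃ m₀ ∈ Finset.Icc 1 N, Int.fract (α * (m₀ : ℕ)) = x := by
      rw [hSdef] at hxS; exact Finset.mem_image.mp hxS
    have hyrep : ∃ n₀ ∈ Finset.Icc 1 N, Int.fract (α * (n₀ : ℕ)) = y := by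
      rw [hSdef] at hyS; exact Finset.mem_image.mp hyS
    obtain ⟨m₀, hm₀, hm₀x⟩ := hxrep
    obtain ⟨n₀, hn₀, hn₀y⟩ := hyrep
    rw [Finset.mem_Icc] at hm₀ hn₀
    -- bounds on x, y
    have hx0 : 0 ≤ x := hm₀x ▸ Int.fract_nonneg _
    have hy1 : y < 1 := hn₀y ▸ Int.fract_lt_one _
    -- generic membership of fract (α j) for 1 ≤ j ≤ N
    have hfmem : ∀ j : ℤ, 1 ≤ j → j ≤ (N : ℤ) → Int.fract (α * (j : ℝ)) ∈ S := by
      intro j h1 h2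
      rw [hSdef]
      refine Finset.mem_image.mpr ⟨j.toNat, Finset.mem_Icc.mpr ⟨by omega, by omega⟩, ?_⟩
      have hc : ((j.toNat : ℕ) : ℝ) = (j : ℝ) := by
        rw [← Int.cast_natCast]; exact_mod_cast congrArg (fun z : ℤ => (z : ℝ)) (Int.toNat_of_nonneg (by omega))
      rw [hc]
    -- min and max attained
    have hminmem : S.min' hS ∈ (Finset.Icc 1 N).image fun n : ℕ => Int.fract (α * n) := by
      rw [← hSdef]; exact S.min'_mem hS
    have hmaxmem : S.max' hS ∈ (Finset.Icc 1 N).image fun n : ℕ => Int.fract (α * n) := by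
      rw [← hSdef]; exact S.max'_mem hS
    obtain ⟨a₀, ha₀, ha₀v⟩ := Finset.mem_image.mp hminmem
    obtain ⟨b₀, hb₀, hb₀v⟩ := Finset.mem_image.mp hmaxmem
    rw [Finset.mem_Icc] at ha₀ hb₀
    -- express d as fract (α * k)
    set k : ℤ := (n₀ : ℤ) - (m₀ : ℤ) with hk
    have hk0 : k ≠ 0 := by
      intro h
      have : (n₀ : ℤ) = (m₀ : ℤ) := by omega
      have : n₀ = m₀ := by exact_mod_cast this
      rw [this, hm₀x] at hn₀y
      exact absurd hn₀y (ne_of_lt hxy)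
    have hfract_diff : ∀ (p q : ℕ), Int.fract (α * ((p : ℤ) - (q : ℤ) : ℤ)) =
        Int.fract (Int.fract (α * (p : ℕ)) - Int.fract (α * (q : ℕ))) := by
      intro p q
      have h1 : α * (((p : ℤ) - (q : ℤ) : ℤ) : ℝ) =
          (Int.fract (α * (p : ℕ)) - Int.fract (α * (q : ℕ)))
            + ((⌊α * (p : ℕ)⌋ - ⌊α * (q : ℕ)⌋ : ℤ) : ℝ) := by
        have hp : Int.fract (α * ((p : ℕ) : ℝ)) = α * p - ⌊α * ((p : ℕ) : ℝ)⌋ := rfl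
        have hq : Int.fract (α * ((q : ℕ) : ℝ)) = α * q - ⌊α * ((q : ℕ) : ℝ)⌋ := rfl
        push_cast
        rw [hp, hq]; ring
      rw [h1, Int.fract_add_intCast]
    have hdk : Int.fract (α * (k : ℝ)) = d := by
      rw [hk, hfract_diff n₀ m₀, hm₀x, hn₀y]
      rw [Int.fract_eq_self.mpr ⟨by linarith, by linarith⟩]
      rw [← hdi]
    -- the adjacency minimality hypothesis
    have hadj : ∀ j : ℤ, j ≠ 0 → 1 ≤ (m₀ : ℤ) + j → (m₀ : ℤ) + j ≤ (N : ℤ) →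
        Int.fract (α * (k : ℝ)) ≤ Int.fract (α * (j : ℝ)) := by
      intro j hj0 hj1 hjN
      by_contra hcon
      push_neg at hcon
      have hjpos : 0 < Int.fract (α * (j : ℝ)) := tg_pos hα hj0
      have hjlt : Int.fract (α * (j : ℝ)) < y - x := by rw [hdk, ← hdi] at hcon; linarith
      -- the point fract (α (m₀ + j)) lies strictly between x and y
      have hp1 : Int.fract (α * (((m₀ : ℤ) + j : ℤ) : ℝ)) = x + Int.fract (α * (j : ℝ)) := by
        have h1 : α * (((m₀ : ℤ) + j : ℤ) : ℝ) =
            (x + Int.fract (α * (j : ℝ))) + ((⌊α * ((m₀ : ℕ) : ℝ)⌋ + ⌊α * ((j : ℤ) : ℝ)⌋ : ℤ) : ℝ) := by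
          have hmm : Int.fract (α * ((m₀ : ℕ) : ℝ)) = α * m₀ - ⌊α * ((m₀ : ℕ) : ℝ)⌋ := rfl
          have hjj : Int.fract (α * ((j : ℤ) : ℝ)) = α * j - ⌊α * ((j : ℤ) : ℝ)⌋ := rfl
          rw [← hm₀x, hmm, hjj]
          push_cast
          ring
        rw [h1, Int.fract_add_intCast]
        exact Int.fract_eq_self.mpr ⟨by linarith, by linarith⟩
      have hpS : Int.fract (α * (((m₀ : ℤ) + j : ℤ) : ℝ)) ∈ S := hfmem _ hj1 hjN
      rw [hp1] at hpS
      have := hadjS _ hpS (by linarith)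
      linarith
    -- apply the core lemma
    have hlen2 : l.length = S.card := by rw [hl]; exact Finset.length_sort _
    have hcard : 1 < S.card := by omega
    have hAB : Int.fract (α * ((a₀ : ℤ) : ℝ)) < Int.fract (α * ((b₀ : ℤ) : ℝ)) := by
      rw [tg_cast, tg_cast, ha₀v, hb₀v]
      exact S.min'_lt_max'_of_card hcard
    have minA : ∀ j : ℤ, 1 ≤ j → j ≤ (N : ℤ) →
        Int.fract (α * ((a₀ : ℤ) : ℝ)) ≤ Int.fract (α * (j : ℝ)) := by
      intro j h1 h2
      rw [tg_cast, ha₀v]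
      exact S.min'_le _ (hfmem j h1 h2)
    have maxB : ∀ j : ℤ, 1 ≤ j → j ≤ (N : ℤ) →
        Int.fract (α * (j : ℝ)) ≤ Int.fract (α * ((b₀ : ℤ) : ℝ)) := by
      intro j h1 h2
      rw [tg_cast, hb₀v]
      exact S.le_max' _ (hfmem j h1 h2)
    have := tg_core hα (N := (N : ℤ)) (a := (a₀ : ℤ)) (b := (b₀ : ℤ)) (m := (m₀ : ℤ)) (k := k)
      (by omega) (by omega) (by omega) (by omega) (by omega) (by omega)
      hk0 (by omega) (by omega) minA maxB hAB hadj
    rw [hdk, tg_cast, tg_cast, ha₀v, hb₀v] at this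
    exact this
  refine ⟨key, ?_⟩
  have hsub : consecDiffs S ⊆
      {S.min' hS, 1 - S.max' hS, S.min' hS + (1 - S.max' hS)} := by
    intro d hd
    rcases key d hd with h | h | h <;> simp [h]
  calc (consecDiffs S).card ≤ _ := Finset.card_le_card hsub
    _ ≤ 3 := by
      apply le_trans (Finset.card_insert_le _ _)
      have := Finset.card_insert_le (1 - S.max' hS) ({S.min' hS + (1 - S.max' hS)} : Finset ℝ)
      simp at this ⊢
      omega
end

section
/- (The 3k-Gaps theorem) Let α, β_1, …, β_k be real numbers and N_1, …, N_k positive integers, and let A := {{β_i + nα} : 1 ≤ n ≤ N_i, 1 ≤ i ≤ k} ⊂ [0,1) be the set of fractional parts of the numbers β_i + nα. Suppose these N_1 + … + N_k points are pairwise distinct, and list the elements of A in increasing order as a_1 < a_2 < … < a_M. Then the set of consecutive differences taken circularly, {a_2 − a_1, a_3 − a_2, …, a_M − a_{M−1}, a_1 + 1 − a_M}, has at most 3k distinct elements. -/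
open Finset

private lemma fract_sub_fract (x y : ℝ) :
    Int.fract (Int.fract x - Int.fract y) = Int.fract (x - y) := by
  have h1 : Int.fract x - Int.fract y = (x - y) - ((⌊x⌋ - ⌊y⌋ : ℤ) : ℝ) := by
    unfold Int.fract; push_cast; ring
  rw [h1, Int.fract_sub_intCast]

private lemma fract_sub_left (x y : ℝ) :
    Int.fract (Int.fract x - y) = Int.fract (x - y) := by
  have h1 : Int.fract x - y = (x - y) - ((⌊x⌋ : ℤ) : ℝ) := by unfold Int.fract; ring
  rw [h1, Int.fract_sub_intCast]

private lemma fract_sub_right (x y : ℝ) :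
    Int.fract (x - Int.fract y) = Int.fract (x - y) := by
  have h1 : x - Int.fract y = (x - y) + ((⌊y⌋ : ℤ) : ℝ) := by unfold Int.fract; ring
  rw [h1, Int.fract_add_intCast]

private lemma fract_add_left (x y : ℝ) :
    Int.fract (Int.fract x + y) = Int.fract (x + y) := by
  have h1 : Int.fract x + y = (x + y) - ((⌊x⌋ : ℤ) : ℝ) := by unfold Int.fract; ring
  rw [h1, Int.fract_sub_intCast]

private lemma eq_of_fract_sub_eq_zero {a b : ℝ} (ha : 0 ≤ a) (ha1 : a < 1)
    (hb : 0 ≤ b) (hb1 : b < 1) (h : Int.fract (b - a) = 0) : b = a := by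
  have hf : b - a - (⌊b - a⌋ : ℝ) = 0 := h
  have h1 : (-1 : ℝ) < (⌊b - a⌋ : ℝ) := by linarith
  have h2 : ((⌊b - a⌋ : ℝ)) < 1 := by linarith
  have : ⌊b - a⌋ = 0 := by
    have i1 : (-1 : ℤ) < ⌊b - a⌋ := by exact_mod_cast h1
    have i2 : ⌊b - a⌋ < 1 := by exact_mod_cast h2
    omega
  rw [this] at hf; push_cast at hf; linarith

private lemma fract_sub_pos {a b : ℝ} (ha : 0 ≤ a) (ha1 : a < 1)
    (hb : 0 ≤ b) (hb1 : b < 1) (hne : b ≠ a) : 0 < Int.fract (b - a) := by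
  rcases lt_or_eq_of_le (Int.fract_nonneg (b - a)) with h | h
  · exact h
  · exact absurd (eq_of_fract_sub_eq_zero ha ha1 hb hb1 h.symm) hne

private lemma fract_cancel_left {x c c' : ℝ} (hc : 0 ≤ c) (hc1 : c < 1)
    (hc' : 0 ≤ c') (hc1' : c' < 1)
    (h : Int.fract (c - x) = Int.fract (c' - x)) : c = c' := by
  refine eq_of_fract_sub_eq_zero hc' hc1' hc hc1 ?_
  have : Int.fract (c - c') = Int.fract (Int.fract (c - x) - Int.fract (c' - x)) := by
    rw [fract_sub_fract]; ring_nf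
  rw [this, h, sub_self, Int.fract_zero]

private lemma fract_cancel_right {x c c' : ℝ} (hc : 0 ≤ c) (hc1 : c < 1)
    (hc' : 0 ≤ c') (hc1' : c' < 1)
    (h : Int.fract (x - c) = Int.fract (x - c')) : c = c' := by
  refine eq_of_fract_sub_eq_zero hc' hc1' hc hc1 ?_
  have : Int.fract (c - c') = Int.fract (Int.fract (x - c') - Int.fract (x - c)) := by
    rw [fract_sub_fract]; ring_nf
  rw [this, h, sub_self, Int.fract_zero]

private lemma fract_neg_add_one {x : ℝ} (h : -1 ≤ x) (h2 : x < 0) : Int.fract x = x + 1 := by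
  have : Int.fract x = Int.fract (x + 1) := by
    rw [show x + 1 = x + ((1:ℤ):ℝ) by push_cast; ring, Int.fract_add_intCast]
  rw [this, Int.fract_eq_self.2 ⟨by linarith, by linarith⟩]


private noncomputable def gap (A : Finset ℝ) (a : ℝ) : ℝ :=
  if h : ((A.erase a).image fun b => Int.fract (b - a)).Nonempty
  then ((A.erase a).image fun b => Int.fract (b - a)).min' h else 1

private noncomputable def gpb (A : Finset ℝ) (a : ℝ) : ℝ :=
  if h : ((A.erase a).image fun b => Int.fract (a - b)).Nonempty
  then ((A.erase a).image fun b => Int.fract (a - b)).min' h else 1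

private noncomputable def nxt (A : Finset ℝ) (a : ℝ) : ℝ := Int.fract (a + gap A a)
private noncomputable def prv (A : Finset ℝ) (a : ℝ) : ℝ := Int.fract (a - gpb A a)

section GapLemmas
set_option linter.unusedSectionVars false
variable {A : Finset ℝ} (h2 : 2 ≤ A.card) (hIco : ∀ a ∈ A, 0 ≤ a ∧ a < 1)
include h2 hIco

private lemma erase_ne (a : ℝ) : (A.erase a).Nonempty := by
  rw [← Finset.card_pos]
  have := Finset.pred_card_le_card_erase (s := A) (a := a)
  omega

private lemma exists_gap (a : ℝ) : ∃ c ∈ A.erase a, Int.fract (c - a) = gap A a := by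
  have hne : ((A.erase a).image fun b => Int.fract (b - a)).Nonempty :=
    (erase_ne h2 hIco a).image _
  have hm := Finset.min'_mem _ hne
  rw [Finset.mem_image] at hm
  obtain ⟨c, hc, hceq⟩ := hm
  exact ⟨c, hc, by rw [gap, dif_pos hne, hceq]⟩

private lemma gap_le {a b : ℝ} (hb : b ∈ A.erase a) : gap A a ≤ Int.fract (b - a) := by
  have hne : ((A.erase a).image fun b => Int.fract (b - a)).Nonempty :=
    (erase_ne h2 hIco a).image _
  rw [gap, dif_pos hne]
  exact Finset.min'_le _ _ (Finset.mem_image_of_mem _ hb)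

private lemma le_gap {a v : ℝ} (h : ∀ b ∈ A.erase a, v ≤ Int.fract (b - a)) : v ≤ gap A a := by
  have hne : ((A.erase a).image fun b => Int.fract (b - a)).Nonempty :=
    (erase_ne h2 hIco a).image _
  rw [gap, dif_pos hne]
  refine Finset.le_min' _ _ _ ?_
  intro y hy
  rw [Finset.mem_image] at hy
  obtain ⟨b, hb, rfl⟩ := hy
  exact h b hb

private lemma exists_gpb (a : ℝ) : ∃ c ∈ A.erase a, Int.fract (a - c) = gpb A a := by
  have hne : ((A.erase a).image fun b => Int.fract (a - b)).Nonempty :=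
    (erase_ne h2 hIco a).image _
  have hm := Finset.min'_mem _ hne
  rw [Finset.mem_image] at hm
  obtain ⟨c, hc, hceq⟩ := hm
  exact ⟨c, hc, by rw [gpb, dif_pos hne, hceq]⟩

private lemma gpb_le {a b : ℝ} (hb : b ∈ A.erase a) : gpb A a ≤ Int.fract (a - b) := by
  have hne : ((A.erase a).image fun b => Int.fract (a - b)).Nonempty :=
    (erase_ne h2 hIco a).image _
  rw [gpb, dif_pos hne]
  exact Finset.min'_le _ _ (Finset.mem_image_of_mem _ hb)


private lemma gap_nonneg (a : ℝ) : 0 ≤ gap A a := by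
  obtain ⟨c, _, hc⟩ := exists_gap h2 hIco a
  rw [← hc]; exact Int.fract_nonneg _

private lemma gap_lt_one (a : ℝ) : gap A a < 1 := by
  obtain ⟨c, _, hc⟩ := exists_gap h2 hIco a
  rw [← hc]; exact Int.fract_lt_one _

private lemma gpb_nonneg (a : ℝ) : 0 ≤ gpb A a := by
  obtain ⟨c, _, hc⟩ := exists_gpb h2 hIco a
  rw [← hc]; exact Int.fract_nonneg _

private lemma gpb_lt_one (a : ℝ) : gpb A a < 1 := by
  obtain ⟨c, _, hc⟩ := exists_gpb h2 hIco a
  rw [← hc]; exact Int.fract_lt_one _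

private lemma gap_pos {a : ℝ} (ha : a ∈ A) : 0 < gap A a := by
  obtain ⟨c, hc, hceq⟩ := exists_gap h2 hIco a
  rw [Finset.mem_erase] at hc
  obtain ⟨h0, h1⟩ := hIco a ha
  obtain ⟨h0', h1'⟩ := hIco c hc.2
  rw [← hceq]
  exact fract_sub_pos h0 h1 h0' h1' hc.1

private lemma gpb_pos {a : ℝ} (ha : a ∈ A) : 0 < gpb A a := by
  obtain ⟨c, hc, hceq⟩ := exists_gpb h2 hIco a
  rw [Finset.mem_erase] at hc
  obtain ⟨h0, h1⟩ := hIco a ha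
  obtain ⟨h0', h1'⟩ := hIco c hc.2
  rw [← hceq]
  exact fract_sub_pos h0' h1' h0 h1 (Ne.symm hc.1)

private lemma nxt_dist (a : ℝ) : Int.fract (nxt A a - a) = gap A a := by
  rw [nxt, fract_sub_left, add_sub_cancel_left,
    Int.fract_eq_self.2 ⟨gap_nonneg h2 hIco a, gap_lt_one h2 hIco a⟩]

private lemma prv_dist (a : ℝ) : Int.fract (a - prv A a) = gpb A a := by
  rw [prv, fract_sub_right, sub_sub_cancel,
    Int.fract_eq_self.2 ⟨gpb_nonneg h2 hIco a, gpb_lt_one h2 hIco a⟩]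

private lemma nxt_unique {a c : ℝ} (hc : 0 ≤ c) (hc1 : c < 1)
    (h : Int.fract (c - a) = gap A a) : c = nxt A a := by
  refine fract_cancel_left (x := a) hc hc1 (Int.fract_nonneg _) (Int.fract_lt_one _) ?_
  rw [h, nxt_dist h2 hIco]

private lemma prv_unique {a c : ℝ} (hc : 0 ≤ c) (hc1 : c < 1)
    (h : Int.fract (a - c) = gpb A a) : c = prv A a := by
  refine fract_cancel_right (x := a) hc hc1 (Int.fract_nonneg _) (Int.fract_lt_one _) ?_
  rw [h, prv_dist h2 hIco]

private lemma nxt_mem {a : ℝ} (ha : a ∈ A) : nxt A a ∈ A := by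
  obtain ⟨c, hc, hceq⟩ := exists_gap h2 hIco a
  have hcA := (Finset.mem_erase.1 hc).2
  obtain ⟨h0', h1'⟩ := hIco c hcA
  rw [← nxt_unique h2 hIco h0' h1' hceq]
  exact hcA

private lemma prv_mem {a : ℝ} (ha : a ∈ A) : prv A a ∈ A := by
  obtain ⟨c, hc, hceq⟩ := exists_gpb h2 hIco a
  have hcA := (Finset.mem_erase.1 hc).2
  obtain ⟨h0', h1'⟩ := hIco c hcA
  rw [← prv_unique h2 hIco h0' h1' hceq]
  exact hcA

private lemma nxt_ne {a : ℝ} (ha : a ∈ A) : nxt A a ≠ a := by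
  intro h
  have := nxt_dist h2 hIco (A := A) a
  rw [h, sub_self, Int.fract_zero] at this
  exact absurd this.symm (ne_of_gt (gap_pos h2 hIco ha))

private lemma prv_ne {a : ℝ} (ha : a ∈ A) : prv A a ≠ a := by
  intro h
  have := prv_dist h2 hIco (A := A) a
  rw [h, sub_self, Int.fract_zero] at this
  exact absurd this.symm (ne_of_gt (gpb_pos h2 hIco ha))

private lemma gap_prv {a : ℝ} (ha : a ∈ A) : gap A (prv A a) = gpb A a := by
  have hpA := prv_mem h2 hIco ha
  have haep : a ∈ A.erase (prv A a) := Finset.mem_erase.2 ⟨Ne.symm (prv_ne h2 hIco ha), ha⟩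
  have hle : gap A (prv A a) ≤ gpb A a := by
    have := gap_le h2 hIco haep
    rwa [prv_dist h2 hIco] at this
  obtain ⟨x, hx, hxeq⟩ := exists_gap h2 hIco (prv A a)
  rw [Finset.mem_erase] at hx
  by_cases hxa : x = a
  · rw [← hxeq, hxa, prv_dist h2 hIco]
  · exfalso
    have hvpos : 0 < gap A (prv A a) := gap_pos h2 hIco hpA
    -- fract (a - x) = gpb a - gap (prv a)
    have key : Int.fract (a - x) = gpb A a - gap A (prv A a) := by
      have h1 : Int.fract (a - x) =
          Int.fract (Int.fract (a - prv A a) - Int.fract (x - prv A a)) := by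
        rw [fract_sub_fract]; ring_nf
      rw [h1, prv_dist h2 hIco, hxeq]
      exact Int.fract_eq_self.2 ⟨by linarith, by linarith [gpb_lt_one h2 hIco (A := A) a]⟩
    have hxA : x ∈ A.erase a := Finset.mem_erase.2 ⟨hxa, hx.2⟩
    have := gpb_le h2 hIco hxA
    rw [key] at this
    linarith

private lemma gpb_nxt {a : ℝ} (ha : a ∈ A) : gpb A (nxt A a) = gap A a := by
  have hnA := nxt_mem h2 hIco ha
  have haen : a ∈ A.erase (nxt A a) := Finset.mem_erase.2 ⟨fun h => (nxt_ne h2 hIco ha) h.symm, ha⟩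
  have hle : gpb A (nxt A a) ≤ gap A a := by
    have := gpb_le h2 hIco haen
    rwa [nxt_dist h2 hIco] at this
  obtain ⟨x, hx, hxeq⟩ := exists_gpb h2 hIco (nxt A a)
  rw [Finset.mem_erase] at hx
  by_cases hxa : x = a
  · rw [← hxeq, hxa, nxt_dist h2 hIco]
  · exfalso
    have hvpos : 0 < gpb A (nxt A a) := gpb_pos h2 hIco hnA
    have key : Int.fract (x - a) = gap A a - gpb A (nxt A a) := by
      have h1 : Int.fract (x - a) =
          Int.fract (Int.fract (nxt A a - a) - Int.fract (nxt A a - x)) := by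
        rw [fract_sub_fract]; ring_nf
      rw [h1, nxt_dist h2 hIco, hxeq]
      exact Int.fract_eq_self.2 ⟨by linarith, by linarith [gap_lt_one h2 hIco (A := A) a]⟩
    have hxA : x ∈ A.erase a := Finset.mem_erase.2 ⟨hxa, hx.2⟩
    have := gap_le h2 hIco hxA
    rw [key] at this
    linarith

private lemma nxt_prv {a : ℝ} (ha : a ∈ A) : nxt A (prv A a) = a := by
  obtain ⟨h0, h1⟩ := hIco a ha
  refine (nxt_unique h2 hIco h0 h1 ?_).symm
  rw [prv_dist h2 hIco, gap_prv h2 hIco ha]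

private lemma prv_nxt {a : ℝ} (ha : a ∈ A) : prv A (nxt A a) = a := by
  obtain ⟨h0, h1⟩ := hIco a ha
  refine (prv_unique h2 hIco h0 h1 ?_).symm
  rw [nxt_dist h2 hIco, gpb_nxt h2 hIco ha]

end GapLemmas

/-- The `3k`-Gaps theorem of Chung and Graham:  if `A` is the set of the
(pairwise distinct) fractional parts `{βᵢ + nα}`, `1 ≤ n ≤ Nᵢ`, `1 ≤ i ≤ k`,
then the circular consecutive differences of `A` take at most `3k`
distinct values. -/
theorem three_k_gaps (α : ℝ) (k : ℕ) (hk : 0 < k) (β : Fin k → ℝ) (Nn : Fin k → ℕ)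
    (hNn : ∀ i, 1 ≤ Nn i)
    (A : Finset ℝ)
    (hAdef : A = Finset.univ.biUnion fun i =>
      (Finset.Icc 1 (Nn i)).image fun n : ℕ => Int.fract (β i + n * α))
    (hA : A.Nonempty)
    (hdistinct : A.card = ∑ i, Nn i) :
    ((consecDiffs A) ∪ {A.min' hA + 1 - A.max' hA}).card ≤ 3 * k := by
  classical
  set P : Fin k → ℕ → ℝ := fun i n => Int.fract (β i + n * α) with hPdef
  have hIco : ∀ a ∈ A, 0 ≤ a ∧ a < 1 := by
    intro a ha
    rw [hAdef] at ha
    simp only [Finset.mem_biUnion, Finset.mem_univ, true_and, Finset.mem_image,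
      Finset.mem_Icc] at ha
    obtain ⟨i, n, _, rfl⟩ := ha
    exact ⟨Int.fract_nonneg _, Int.fract_lt_one _⟩
  have hmem : ∀ (i : Fin k) (n : ℕ), 1 ≤ n → n ≤ Nn i → P i n ∈ A := by
    intro i n h1 hn
    rw [hAdef]
    simp only [Finset.mem_biUnion, Finset.mem_univ, true_and, Finset.mem_image,
      Finset.mem_Icc]
    exact ⟨i, n, ⟨h1, hn⟩, rfl⟩
  have hrep : ∀ a ∈ A, ∃ i n, 1 ≤ n ∧ n ≤ Nn i ∧ P i n = a := by
    intro a ha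
    rw [hAdef] at ha
    simp only [Finset.mem_biUnion, Finset.mem_univ, true_and, Finset.mem_image,
      Finset.mem_Icc] at ha
    obtain ⟨i, n, hn, heq⟩ := ha
    exact ⟨i, n, hn.1, hn.2, heq⟩
  have hstep : ∀ (i : Fin k) (n : ℕ), P i (n + 1) = Int.fract (P i n + α) := by
    intro i n
    show Int.fract (β i + ((n : ℕ) + 1 : ℕ) * α) = Int.fract (Int.fract (β i + n * α) + α)
    rw [fract_add_left]
    congr 1
    push_cast
    ring
  have htrans : ∀ x y : ℝ,
      Int.fract (Int.fract (x + α) - Int.fract (y + α)) = Int.fract (x - y) := by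
    intro x y
    rw [fract_sub_fract]
    congr 1
    ring
  -- injectivity of representations
  have hinj : ∀ (i : Fin k) (n : ℕ) (i' : Fin k) (n' : ℕ), 1 ≤ n → n ≤ Nn i →
      1 ≤ n' → n' ≤ Nn i' → P i n = P i' n' → i = i' ∧ n = n' := by
    have hsig : (((univ : Finset (Fin k)).sigma fun i => Finset.Icc 1 (Nn i)).image
        (fun p => P p.1 p.2)) = A := by
      rw [hAdef]
      ext x
      simp only [Finset.mem_image, Finset.mem_sigma, Finset.mem_univ, true_and,
        Finset.mem_biUnion, Finset.mem_Icc]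
      constructor
      · rintro ⟨⟨i, n⟩, hn, rfl⟩
        exact ⟨i, n, hn, rfl⟩
      · rintro ⟨i, n, hn, rfl⟩
        exact ⟨⟨i, n⟩, hn, rfl⟩
    have hcards : ((((univ : Finset (Fin k)).sigma fun i => Finset.Icc 1 (Nn i)).image
        (fun p => P p.1 p.2))).card =
        ((univ : Finset (Fin k)).sigma fun i => Finset.Icc 1 (Nn i)).card := by
      rw [hsig, hdistinct, Finset.card_sigma]
      refine Finset.sum_congr rfl fun i _ => ?_
      rw [Nat.card_Icc]
      omega
    have hInj := Finset.injOn_of_card_image_eq hcards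
    intro i n i' n' h1 h2 h1' h2' heq
    have hm1 : (⟨i, n⟩ : Σ _ : Fin k, ℕ) ∈
        (((univ : Finset (Fin k)).sigma fun i => Finset.Icc 1 (Nn i)) : Finset _) := by
      simp only [Finset.mem_sigma, Finset.mem_univ, true_and, Finset.mem_Icc]
      exact ⟨h1, h2⟩
    have hm2 : (⟨i', n'⟩ : Σ _ : Fin k, ℕ) ∈
        (((univ : Finset (Fin k)).sigma fun i => Finset.Icc 1 (Nn i)) : Finset _) := by
      simp only [Finset.mem_sigma, Finset.mem_univ, true_and, Finset.mem_Icc]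
      exact ⟨h1', h2'⟩
    have := hInj (Finset.mem_coe.2 hm1) (Finset.mem_coe.2 hm2) heq
    obtain ⟨hi, hn⟩ := Sigma.mk.inj_iff.1 this
    exact ⟨hi, eq_of_heq hn⟩
  rcases lt_or_ge A.card 2 with hc2 | h2
  · -- |A| = 1
    have hc1 : A.card = 1 := by
      have := Finset.card_pos.2 hA
      omega
    obtain ⟨a, ha⟩ := Finset.card_eq_one.1 hc1
    have hcd : consecDiffs A = ∅ := by
      rw [consecDiffs, ha, Finset.sort_singleton]
      simp
    rw [hcd, Finset.empty_union, Finset.card_singleton]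
    omega
  -- main case
  · set l := A.sort (· ≤ ·) with hl
    have hlen : l.length = A.card := Finset.length_sort _
    have hsorted : l.Pairwise (· < ·) := (Finset.sortedLT_sort A).pairwise
    have hmeml : ∀ x ∈ l, x ∈ A := fun x hx => (Finset.mem_sort _).1 hx
    have hmono : ∀ (p q : ℕ) (hp : p < l.length) (hq : q < l.length), p < q →
        l[p] < l[q] := by
      intro p q hp hq hpq
      have := List.Pairwise.rel_get_of_lt hsorted (a := ⟨p, hp⟩) (b := ⟨q, hq⟩)
        (Fin.mk_lt_mk.2 hpq)
      simpa using this
    -- gap at consecutive sorted points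
    have hgapconsec : ∀ (i : ℕ) (h : i + 1 < l.length),
        gap A (l[i]'(by omega)) = l[i + 1] - l[i]'(by omega) := by
      intro i h
      have hxA : l[i]'(by omega) ∈ A := hmeml _ (List.getElem_mem _)
      have hyA : l[i + 1] ∈ A := hmeml _ (List.getElem_mem _)
      have hxy : l[i]'(by omega) < l[i + 1] := hmono i (i + 1) (by omega) h (by omega)
      obtain ⟨hx0, hx1⟩ := hIco _ hxA
      obtain ⟨hy0, hy1⟩ := hIco _ hyA
      have hyer : l[i + 1] ∈ A.erase (l[i]'(by omega)) :=
        Finset.mem_erase.2 ⟨ne_of_gt hxy, hyA⟩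
      have hfr : Int.fract (l[i + 1] - l[i]'(by omega)) = l[i + 1] - l[i]'(by omega) :=
        Int.fract_eq_self.2 ⟨by linarith, by linarith⟩
      refine le_antisymm (by rw [← hfr]; exact gap_le h2 hIco hyer) ?_
      refine le_gap h2 hIco ?_
      intro b hb
      obtain ⟨hbne, hbA⟩ := Finset.mem_erase.1 hb
      obtain ⟨hb0, hb1⟩ := hIco b hbA
      rcases lt_or_gt_of_ne hbne with hlt | hgt
      · -- b < l[i]
        rw [fract_neg_add_one (by linarith) (by linarith)]
        linarith
      · -- b > l[i] : b is l[j] with j ≥ i+1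
        obtain ⟨j, hj, hjb⟩ := List.mem_iff_getElem.1 ((Finset.mem_sort (α := ℝ) (· ≤ ·)).2 hbA)
        have hij : i + 1 ≤ j := by
          by_contra hcon
          push_neg at hcon
          rcases Nat.lt_or_ge j i with hji | hji
          · have := hmono j i hj (by omega) hji
            rw [hjb] at this
            linarith
          · have hji' : j = i := by omega
            subst hji'
            rw [hjb] at hgt
            exact lt_irrefl _ hgt
        have hble : l[i+1] ≤ b := by
          rcases eq_or_lt_of_le hij with rfl | hlt2
          · rw [hjb]
          · rw [← hjb]
            exact le_of_lt (hmono (i+1) j h hj hlt2)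
        rw [Int.fract_eq_self.2 ⟨by linarith, by linarith⟩]
        linarith
    -- gap at the max
    have hminA := A.min'_mem hA
    have hmaxA := A.max'_mem hA
    obtain ⟨hmin0, hmin1⟩ := hIco _ hminA
    obtain ⟨hmax0, hmax1⟩ := hIco _ hmaxA
    have hminmax : A.min' hA < A.max' hA := Finset.min'_lt_max'_of_card A (by omega)
    have hgapmax : gap A (A.max' hA) = A.min' hA + 1 - A.max' hA := by
      have hminer : A.min' hA ∈ A.erase (A.max' hA) :=
        Finset.mem_erase.2 ⟨ne_of_lt hminmax, hminA⟩
      have hfr : Int.fract (A.min' hA - A.max' hA) = A.min' hA + 1 - A.max' hA := by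
        rw [fract_neg_add_one (by linarith) (by linarith)]
        ring
      refine le_antisymm (by rw [← hfr]; exact gap_le h2 hIco hminer) ?_
      refine le_gap h2 hIco ?_
      intro b hb
      obtain ⟨hbne, hbA⟩ := Finset.mem_erase.1 hb
      obtain ⟨hb0, hb1⟩ := hIco b hbA
      have hblt : b < A.max' hA := lt_of_le_of_ne (Finset.le_max' A b hbA) hbne
      have hbge : A.min' hA ≤ b := Finset.min'_le A b hbA
      rw [fract_neg_add_one (by linarith) (by linarith)]
      linarith
    -- every target value is a gap value at some point of A
    have htarget : ∀ v ∈ (consecDiffs A) ∪ {A.min' hA + 1 - A.max' hA},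
        ∃ x ∈ A, gap A x = v := by
      intro v hv
      rcases Finset.mem_union.1 hv with hv | hv
      · rw [consecDiffs, List.mem_toFinset, ← hl] at hv
        obtain ⟨i, hi, hieq⟩ := List.mem_iff_getElem.1 hv
        have hilen : i + 1 < l.length := by
          simp only [List.length_zipWith, List.length_tail] at hi
          omega
        have : (List.zipWith (fun x y => y - x) l l.tail)[i]'hi =
            l.tail[i]'(by simp only [List.length_tail]; omega) - l[i]'(by omega) :=
          List.getElem_zipWith
        rw [List.getElem_tail] at this
        refine ⟨l[i]'(by omega), hmeml _ (List.getElem_mem _), ?_⟩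
        rw [hgapconsec i hilen, ← hieq, this]
      · rw [Finset.mem_singleton] at hv
        exact ⟨A.max' hA, hmaxA, hv ▸ hgapmax⟩
    -- the special finite set S
    set S : Finset ℝ :=
      ((univ : Finset (Fin k)).image fun j => P j 1) ∪
      ((univ : Finset (Fin k)).image fun j => prv A (P j 1)) ∪
      ((univ : Finset (Fin k)).image fun j => Int.fract (prv A (P j (Nn j)) + α))
      with hS
    have hScard : S.card ≤ 3 * k := by
      calc S.card ≤ (((univ : Finset (Fin k)).image fun j => P j 1) ∪
          ((univ : Finset (Fin k)).image fun j => prv A (P j 1))).card +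
          ((univ : Finset (Fin k)).image fun j => Int.fract (prv A (P j (Nn j)) + α)).card :=
            Finset.card_union_le _ _
      _ ≤ (((univ : Finset (Fin k)).image fun j => P j 1).card +
          ((univ : Finset (Fin k)).image fun j => prv A (P j 1)).card) +
          ((univ : Finset (Fin k)).image fun j => Int.fract (prv A (P j (Nn j)) + α)).card := by
            have := Finset.card_union_le ((univ : Finset (Fin k)).image fun j => P j 1)
              ((univ : Finset (Fin k)).image fun j => prv A (P j 1))
            omega
      _ ≤ k + k + k := by
            have c1 := Finset.card_image_le (s := (univ : Finset (Fin k)))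
              (f := fun j => P j 1)
            have c2 := Finset.card_image_le (s := (univ : Finset (Fin k)))
              (f := fun j => prv A (P j 1))
            have c3 := Finset.card_image_le (s := (univ : Finset (Fin k)))
              (f := fun j => Int.fract (prv A (P j (Nn j)) + α))
            simp only [Finset.card_univ, Fintype.card_fin] at c1 c2 c3
            omega
      _ = 3 * k := by ring
    -- main induction: every gap value is attained on S
    have main : ∀ n : ℕ, ∀ i : Fin k, 1 ≤ n → n ≤ Nn i →
        ∃ s ∈ S, gap A s = gap A (P i n) := by
      intro n
      induction n with
      | zero => intro i h1 _; omega
      | succ n ih =>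
        intro i h1 hn
        by_cases hn0 : n = 0
        · subst hn0
          refine ⟨P i 1, ?_, rfl⟩
          exact Finset.mem_union_left _ (Finset.mem_union_left _
            (Finset.mem_image_of_mem _ (Finset.mem_univ i)))
        · have hn1 : 1 ≤ n := by omega
          have ha₀A : P i n ∈ A := hmem i n hn1 (by omega)
          have haA : P i (n + 1) ∈ A := hmem i (n + 1) (by omega) hn
          by_cases hgap : gap A (P i (n + 1)) = gap A (P i n)
          · obtain ⟨s, hs, hgs⟩ := ih i hn1 (by omega)
            exact ⟨s, hs, hgs.trans hgap.symm⟩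
          · have hb₀A : nxt A (P i n) ∈ A := nxt_mem h2 hIco ha₀A
            obtain ⟨j, m, hm1, hm2, hjm⟩ := hrep _ hb₀A
            by_cases hmN : m = Nn j
            · -- the successor of P i n is an endpoint
              refine ⟨P i (n + 1), ?_, rfl⟩
              have hkey : P i (n + 1) = Int.fract (prv A (P j (Nn j)) + α) := by
                rw [← hmN, hjm, prv_nxt h2 hIco ha₀A, hstep]
              rw [hkey]
              exact Finset.mem_union_right _ (Finset.mem_image_of_mem _ (Finset.mem_univ j))
            · -- the successor of P i n is not an endpoint
              have hbA : P j (m + 1) ∈ A := hmem j (m + 1) (by omega) (by omega)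
              have hdb : Int.fract (P j (m + 1) - P i (n + 1)) = gap A (P i n) := by
                rw [hstep, hstep, hPdef]
                simp only []
                rw [htrans]
                show Int.fract (P j m - P i n) = _
                rw [hjm, nxt_dist h2 hIco]
              have hgap0 : 0 < gap A (P i n) := gap_pos h2 hIco ha₀A
              have hbne : P j (m + 1) ≠ P i (n + 1) := by
                intro hcon
                rw [hcon, sub_self, Int.fract_zero] at hdb
                linarith
              have hlt : gap A (P i (n + 1)) < gap A (P i n) := by
                refine lt_of_le_of_ne ?_ hgap
                rw [← hdb]
                exact gap_le h2 hIco (Finset.mem_erase.2 ⟨hbne, hbA⟩)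
              have hcA : nxt A (P i (n + 1)) ∈ A := nxt_mem h2 hIco haA
              obtain ⟨j', m', hm'1, hm'2, hj'm'⟩ := hrep _ hcA
              by_cases hm'e : m' = 1
              · -- the successor of P i (n+1) is a starting point
                refine ⟨P i (n + 1), ?_, rfl⟩
                have hkey : P i (n + 1) = prv A (P j' 1) := by
                  rw [hm'e] at hj'm'
                  rw [hj'm', prv_nxt h2 hIco haA]
                rw [hkey]
                exact Finset.mem_union_left _ (Finset.mem_union_right _
                  (Finset.mem_image_of_mem _ (Finset.mem_univ j')))
              · -- impossible: pull back the strictly closer point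
                exfalso
                have hm'2' : 2 ≤ m' := by omega
                have hc₀A : P j' (m' - 1) ∈ A := hmem j' (m' - 1) (by omega) (by omega)
                have hcstep : P j' m' = Int.fract (P j' (m' - 1) + α) := by
                  rw [← hstep]
                  congr 1
                  omega
                have hdc : Int.fract (P j' (m' - 1) - P i n) = gap A (P i (n + 1)) := by
                  have h1 : Int.fract (nxt A (P i (n + 1)) - P i (n + 1)) =
                      gap A (P i (n + 1)) := nxt_dist h2 hIco _
                  rw [← hj'm', hcstep, hstep i n, htrans] at h1
                  rw [hstep i n]
                  exact h1
                have hgap0' : 0 < gap A (P i (n + 1)) := gap_pos h2 hIco haA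
                have hcne : P j' (m' - 1) ≠ P i n := by
                  intro hcon
                  rw [hcon, sub_self, Int.fract_zero] at hdc
                  linarith
                have := gap_le h2 hIco (Finset.mem_erase.2 ⟨hcne, hc₀A⟩)
                rw [hdc] at this
                linarith
    -- finish
    have hsub : (consecDiffs A) ∪ {A.min' hA + 1 - A.max' hA} ⊆ S.image (gap A) := by
      intro v hv
      obtain ⟨x, hx, hgx⟩ := htarget v hv
      obtain ⟨i, n, h1, hn, hPx⟩ := hrep x hx
      obtain ⟨s, hs, hgs⟩ := main n i h1 hn
      exact Finset.mem_image.2 ⟨s, hs, by rw [hgs, hPx, hgx]⟩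
    calc ((consecDiffs A) ∪ {A.min' hA + 1 - A.max' hA}).card
        ≤ (S.image (gap A)).card := Finset.card_le_card hsub
      _ ≤ S.card := Finset.card_image_le
      _ ≤ 3 * k := hScard
end

section
/- Let B be a finite subset of ℝ/ℤ with at least two elements, and let C be a subset of B such that C − B = B − B (as subsets of ℝ/ℤ). For c ∈ C, let b_c^− be the smaller (clockwise) neighbour of c in B, i.e. the unique b ∈ B \ {c} for which the representative of c − b in (0,1) is minimal, and let b_c^+ be the larger (anticlockwise) neighbour of c in B, i.e. the unique b ∈ B \ {c} for which the representative of b − c in (0,1) is minimal. Set R^− := {c − b_c^− : c ∈ C} and R^+ := {c − b_c^+ : c ∈ C}. Then every element of B − B is a sum of finitely many elements of R^−, and also a sum of finitely many elements of R^+; that is, B − B ⊆ ⟨R^−⟩ and B − B ⊆ ⟨R^+⟩, and moreover ⟨R^−⟩ = ⟨R^+⟩, where ⟨S⟩ denotes the additive submonoid of ℝ/ℤ generated by S. -/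
open Pointwise

noncomputable def circleRep (t : AddCircle (1 : ℝ)) : ℝ :=
  (AddCircle.equivIco 1 0 t : ℝ)

lemma circleRep_mem (t : AddCircle (1 : ℝ)) : circleRep t ∈ Set.Ico (0:ℝ) 1 := by
  have h := (AddCircle.equivIco 1 0 t).2
  simpa [circleRep] using h

lemma circleRep_coe (t : AddCircle (1 : ℝ)) : ((circleRep t : ℝ) : AddCircle (1:ℝ)) = t := by
  conv_rhs => rw [← (AddCircle.equivIco 1 0).symm_apply_apply t]
  rfl

lemma circleRep_of_mem {r : ℝ} (hr : r ∈ Set.Ico (0:ℝ) 1) :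
    circleRep ((r : ℝ) : AddCircle (1:ℝ)) = r := by
  unfold circleRep
  rw [AddCircle.equivIco]
  rw [QuotientAddGroup.equivIcoMod_coe]
  exact (toIcoMod_eq_self one_pos).mpr (by simpa using hr)

lemma circleRep_eq_zero (t : AddCircle (1 : ℝ)) : circleRep t = 0 ↔ t = 0 := by
  constructor
  · intro h
    have := circleRep_coe t
    rw [h] at this
    simpa using this.symm
  · intro h
    subst h
    have : ((0:ℝ) : AddCircle (1:ℝ)) = 0 := by norm_num
    rw [← this, circleRep_of_mem (by norm_num)]

lemma circleRep_pos {t : AddCircle (1 : ℝ)} (ht : t ≠ 0) : 0 < circleRep t :=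
  lt_of_le_of_ne (circleRep_mem t).1 (fun h => ht ((circleRep_eq_zero t).mp h.symm))

lemma circleRep_sub {x y : AddCircle (1 : ℝ)} (h : circleRep y ≤ circleRep x) :
    circleRep (x - y) = circleRep x - circleRep y := by
  have hm : circleRep x - circleRep y ∈ Set.Ico (0:ℝ) 1 := by
    constructor
    · linarith
    · have := (circleRep_mem x).2
      have := (circleRep_mem y).1
      linarith
  have : x - y = ((circleRep x - circleRep y : ℝ) : AddCircle (1:ℝ)) := by
    conv_lhs => rw [← circleRep_coe x, ← circleRep_coe y]
    norm_cast
  rw [this, circleRep_of_mem hm]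

/-- Theorem 2 of the paper: if `B` is a finite subset of `ℝ/ℤ` and `C ⊆ B`
satisfies `C - B = B - B`, and for each `c ∈ C` the points `bm c` and `bp c`
are respectively its smaller (clockwise) and larger (anticlockwise) neighbours
in `B`, then every element of `B - B` is a finite sum of elements of
`R⁻ = {c - bm c}` (and of `R⁺ = {c - bp c}`); moreover the additive submonoids
generated by `R⁻` and `R⁺` agree. -/
theorem sums_of_neighbour_gaps (B C : Set (AddCircle (1 : ℝ)))
    (hBfin : B.Finite) (hB2 : 2 ≤ B.ncard) (hCB : C ⊆ B)
    (hdiff : C - B = B - B)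
    (bm bp : AddCircle (1 : ℝ) → AddCircle (1 : ℝ))
    (hbm : ∀ c ∈ C, bm c ∈ B ∧ bm c ≠ c ∧
      ∀ b ∈ B, b ≠ c → circleRep (c - bm c) ≤ circleRep (c - b))
    (hbp : ∀ c ∈ C, bp c ∈ B ∧ bp c ≠ c ∧
      ∀ b ∈ B, b ≠ c → circleRep (bp c - c) ≤ circleRep (b - c)) :
    B - B ⊆ (AddSubmonoid.closure ((fun c => c - bm c) '' C) : Set (AddCircle (1 : ℝ))) ∧
      B - B ⊆ (AddSubmonoid.closure ((fun c => c - bp c) '' C) : Set (AddCircle (1 : ℝ))) ∧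
      AddSubmonoid.closure ((fun c => c - bm c) '' C) =
        AddSubmonoid.closure ((fun c => c - bp c) '' C) := by
  have hBBfin : (B - B).Finite := hBfin.sub hBfin
  have hBBneg : ∀ d ∈ B - B, -d ∈ B - B := by
    rintro d hd
    rw [Set.mem_sub] at hd ⊢
    obtain ⟨x, hx, y, hy, hxy⟩ := hd
    exact ⟨y, hy, x, hx, by rw [← hxy]; abel⟩
  set Mm := AddSubmonoid.closure ((fun c => c - bm c) '' C) with hMm
  set Mp := AddSubmonoid.closure ((fun c => c - bp c) '' C) with hMp
  -- Part 1
  have part1 : B - B ⊆ (Mm : Set (AddCircle (1:ℝ))) := by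
    by_contra hcon
    rw [Set.not_subset] at hcon
    have hS : {d ∈ B - B | d ∉ Mm}.Nonempty := by
      obtain ⟨d, hd1, hd2⟩ := hcon
      exact ⟨d, hd1, hd2⟩
    obtain ⟨d, ⟨hdBB, hdM⟩, hmin⟩ :=
      Set.exists_min_image _ circleRep (hBBfin.subset (Set.sep_subset _ _)) hS
    have hd0 : d ≠ 0 := fun h => hdM (h ▸ Mm.zero_mem)
    have hdCB : d ∈ C - B := by rw [hdiff]; exact hdBB
    rw [Set.mem_sub] at hdCB
    obtain ⟨c, hc, b, hb, hcb⟩ := hdCB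
    have hbc : b ≠ c := by rintro rfl; exact hd0 (by rw [← hcb]; abel)
    obtain ⟨hbmB, hbmne, hbmmin⟩ := hbm c hc
    set g := c - bm c with hg
    have hgM : g ∈ Mm := AddSubmonoid.subset_closure ⟨c, hc, rfl⟩
    have hg0 : g ≠ 0 := sub_ne_zero.mpr (fun h => hbmne h.symm)
    have hgle : circleRep g ≤ circleRep d := by
      rw [← hcb]; exact hbmmin b hb hbc
    set d' := bm c - b with hd'
    have hd'BB : d' ∈ B - B := ⟨bm c, hbmB, b, hb, rfl⟩
    have hdd' : d = g + d' := by rw [← hcb, hg, hd']; abel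
    have hrep : circleRep d' = circleRep d - circleRep g := by
      have : d' = d - g := by rw [hdd']; abel
      rw [this, circleRep_sub hgle]
    have hlt : circleRep d' < circleRep d := by
      have := circleRep_pos hg0; linarith
    have hd'M : d' ∈ Mm := by
      by_contra h
      exact absurd (hmin d' ⟨hd'BB, h⟩) (not_le.mpr hlt)
    exact hdM (hdd' ▸ Mm.add_mem hgM hd'M)
  -- Part 2: first show negatives
  have part2' : ∀ d ∈ B - B, -d ∈ Mp := by
    by_contra hcon
    push_neg at hcon
    have hS : {d ∈ B - B | -d ∉ Mp}.Nonempty := by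
      obtain ⟨d, hd1, hd2⟩ := hcon
      exact ⟨d, hd1, hd2⟩
    obtain ⟨d, ⟨hdBB, hdM⟩, hmin⟩ :=
      Set.exists_min_image _ circleRep (hBBfin.subset (Set.sep_subset _ _)) hS
    have hd0 : d ≠ 0 := fun h => hdM (by rw [h, neg_zero]; exact Mp.zero_mem)
    have hndCB : -d ∈ C - B := by rw [hdiff]; exact hBBneg d hdBB
    rw [Set.mem_sub] at hndCB
    obtain ⟨c, hc, b, hb, hcb⟩ := hndCB
    have hdbc : d = b - c := by rw [← neg_neg d, ← hcb]; abel
    have hbc : b ≠ c := by rintro rfl; exact hd0 (by rw [hdbc]; abel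
    )
    obtain ⟨hbpB, hbpne, hbpmin⟩ := hbp c hc
    set g := c - bp c with hg
    have hgM : g ∈ Mp := AddSubmonoid.subset_closure ⟨c, hc, rfl⟩
    have he0 : bp c - c ≠ 0 := sub_ne_zero.mpr hbpne
    have hele : circleRep (bp c - c) ≤ circleRep d := by
      rw [hdbc]; exact hbpmin b hb hbc
    set d' := b - bp c with hd'
    have hd'BB : d' ∈ B - B := ⟨b, hb, bp c, hbpB, rfl⟩
    have hdd' : d' = d - (bp c - c) := by rw [hd', hdbc]; abel
    have hrep : circleRep d' = circleRep d - circleRep (bp c - c) := by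
      rw [hdd', circleRep_sub hele]
    have hlt : circleRep d' < circleRep d := by
      have := circleRep_pos he0; linarith
    have hd'M : -d' ∈ Mp := by
      by_contra h
      exact absurd (hmin d' ⟨hd'BB, h⟩) (not_le.mpr hlt)
    have : -d = -d' + g := by rw [hdd', hg]; abel
    exact hdM (this ▸ Mp.add_mem hd'M hgM)
  have part2 : B - B ⊆ (Mp : Set (AddCircle (1:ℝ))) := by
    intro d hd
    have := part2' (-d) (hBBneg d hd)
    simpa using this
  refine ⟨part1, part2, ?_⟩
  apply le_antisymm
  · rw [hMm]
    apply AddSubmonoid.closure_le.mpr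
    rintro _ ⟨c, hc, rfl⟩
    exact part2 ⟨c, hCB hc, bm c, (hbm c hc).1, rfl⟩
  · rw [hMp]
    apply AddSubmonoid.closure_le.mpr
    rintro _ ⟨c, hc, rfl⟩
    exact part1 ⟨c, hCB hc, bp c, (hbp c hc).1, rfl⟩
end

section
/- Let m ≥ 2 be an integer and let A := {k² : 1 ≤ k ≤ m} ∪ {m² + j : 1 ≤ j ≤ m² − m} ⊂ ℤ. Then |A| = m², |A + A| < 4m², and for every function a ↦ N_a on A with N_a ∈ A, N_a ≠ a, and |N_a − a| = min{|a' − a| : a' ∈ A, a' ≠ a}, we have |{N_a − a : a ∈ A}| ≥ m. -/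
open Finset Pointwise

/-- The example set `A = {1, 4, 9, …, m²} ∪ {m²+1, m²+2, …, 2m²-m}`:
it satisfies `|A| = m²`, `|A + A| < 4m²`, and any choice of nearest
neighbours `N_a` yields at least `m` distinct differences `N_a - a`. -/
theorem example_set_many_nearest_neighbour_differences (m : ℕ) (hm : 2 ≤ m)
    (A : Finset ℤ)
    (hAdef : A = ((Finset.Icc 1 m).image fun k : ℕ => (k : ℤ) ^ 2) ∪
      ((Finset.Icc 1 (m ^ 2 - m)).image fun j : ℕ => (m : ℤ) ^ 2 + j))
    (Nf : ℤ → ℤ)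
    (hNf : ∀ a ∈ A, Nf a ∈ A ∧ Nf a ≠ a ∧
      ∀ a' ∈ A, a' ≠ a → |Nf a - a| ≤ |a' - a|) :
    A.card = m ^ 2 ∧ (A + A).card < 4 * m ^ 2 ∧
      m ≤ (A.image fun a => Nf a - a).card := by
  have hm' : (2:ℤ) ≤ (m:ℤ) := by exact_mod_cast hm
  have hmsq : m ≤ m ^ 2 := Nat.le_self_pow two_ne_zero m
  -- membership characterization
  have hmem : ∀ x : ℤ, x ∈ A ↔
      (∃ k : ℤ, 1 ≤ k ∧ k ≤ (m:ℤ) ∧ x = k ^ 2) ∨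
        ((m:ℤ) ^ 2 < x ∧ x ≤ 2 * (m:ℤ) ^ 2 - m) := by
    intro x
    rw [hAdef]
    simp only [Finset.mem_union, Finset.mem_image, Finset.mem_Icc]
    constructor
    · rintro (⟨k, ⟨hk1, hk2⟩, rfl⟩ | ⟨j, ⟨hj1, hj2⟩, rfl⟩)
      · exact Or.inl ⟨(k:ℤ), by exact_mod_cast hk1, by exact_mod_cast hk2, rfl⟩
      · refine Or.inr ⟨?_, ?_⟩
        · have h1 : (1:ℤ) ≤ (j:ℤ) := by exact_mod_cast hj1
          linarith
        have hj2' : (j:ℤ) ≤ (m:ℤ) ^ 2 - m := by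
          have := (Nat.cast_le (α := ℤ)).2 hj2
          rwa [Nat.cast_sub hmsq, Nat.cast_pow] at this
        linarith
    · rintro (⟨k, hk1, hk2, rfl⟩ | ⟨h1, h2⟩)
      · refine Or.inl ⟨k.toNat, ⟨by omega, by omega⟩, ?_⟩
        rw [Int.toNat_of_nonneg (by linarith)]
      · obtain ⟨j, hj⟩ : ∃ j : ℕ, x = (m:ℤ) ^ 2 + j :=
          ⟨(x - (m:ℤ) ^ 2).toNat, by rw [Int.toNat_of_nonneg (by linarith)]; ring⟩
        refine Or.inr ⟨j, ⟨?_, ?_⟩, hj.symm⟩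
        · have : (1:ℤ) ≤ (j:ℤ) := by rw [hj] at h1; linarith
          exact_mod_cast this
        · have h3 : (j:ℤ) ≤ ((m ^ 2 - m : ℕ) : ℤ) := by
            rw [Nat.cast_sub hmsq, Nat.cast_pow]
            rw [hj] at h2; linarith
          exact_mod_cast h3
  have hsqA : ∀ k : ℕ, 1 ≤ k → k ≤ m → ((k:ℤ) ^ 2) ∈ A := fun k h1 h2 =>
    (hmem _).2 (Or.inl ⟨(k:ℤ), by exact_mod_cast h1, by exact_mod_cast h2, rfl⟩)
  -- Part 1: cardinality
  have hcard : A.card = m ^ 2 := by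
    have hdisj : Disjoint ((Finset.Icc 1 m).image fun k : ℕ => (k : ℤ) ^ 2)
        ((Finset.Icc 1 (m ^ 2 - m)).image fun j : ℕ => (m : ℤ) ^ 2 + j) := by
      rw [Finset.disjoint_left]
      rintro x hx hx2
      simp only [Finset.mem_image, Finset.mem_Icc] at hx hx2
      obtain ⟨k, ⟨hk1, hk2⟩, rfl⟩ := hx
      obtain ⟨j, ⟨hj1, hj2⟩, h⟩ := hx2
      have h1 : (k:ℤ) ^ 2 ≤ (m:ℤ) ^ 2 := by
        have : k ^ 2 ≤ m ^ 2 := Nat.pow_le_pow_left hk2 2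
        exact_mod_cast this
      have h2 : (1:ℤ) ≤ (j:ℤ) := by exact_mod_cast hj1
      linarith [h.symm]
    have hinj1 : Set.InjOn (fun k : ℕ => (k:ℤ) ^ 2) (Finset.Icc 1 m) := by
      intro a _ b _ h
      simp only at h
      have : a ^ 2 = b ^ 2 := by exact_mod_cast h
      exact Nat.pow_left_injective two_ne_zero this
    have hinj2 : Set.InjOn (fun j : ℕ => (m:ℤ) ^ 2 + j) (Finset.Icc 1 (m ^ 2 - m)) := by
      intro a _ b _ h
      simp only [add_right_inj, Nat.cast_inj] at h
      exact h
    rw [hAdef, Finset.card_union_of_disjoint hdisj,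
      Finset.card_image_of_injOn hinj1, Finset.card_image_of_injOn hinj2,
      Nat.card_Icc, Nat.card_Icc]
    simp only [Nat.add_sub_cancel]
    exact Nat.add_sub_cancel' hmsq
  -- Part 2
  have hAA : (A + A).card < 4 * m ^ 2 := by
    have hAsub : A ⊆ Finset.Icc 1 (2 * (m:ℤ) ^ 2 - m) := by
      intro x hx
      rw [Finset.mem_Icc]
      rcases (hmem x).1 hx with ⟨k, hk1, hk2, rfl⟩ | ⟨h1, h2⟩
      · constructor
        · nlinarith
        · nlinarith
      · constructor
        · nlinarith
        · linarith
    have hsub2 : A + A ⊆ Finset.Icc 2 (4 * (m:ℤ) ^ 2 - 2 * m) := by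
      intro x hx
      rw [Finset.mem_add] at hx
      obtain ⟨a, ha, b, hb, rfl⟩ := hx
      have ha' := Finset.mem_Icc.1 (hAsub ha)
      have hb' := Finset.mem_Icc.1 (hAsub hb)
      rw [Finset.mem_Icc]
      constructor <;> [linarith; linarith]
    have h1 : (A + A).card ≤ (Finset.Icc (2:ℤ) (4 * (m:ℤ) ^ 2 - 2 * m)).card :=
      Finset.card_le_card hsub2
    rw [Int.card_Icc] at h1
    have h3 : (4 * (m:ℤ) ^ 2 - 2 * m + 1 - 2) < ((4 * m ^ 2 : ℕ) : ℤ) := by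
      push_cast; nlinarith
    have h4 : (4 * (m:ℤ) ^ 2 - 2 * (m:ℤ) + 1 - 2).toNat < 4 * m ^ 2 := by
      rcases le_or_gt 0 (4 * (m:ℤ) ^ 2 - 2 * (m:ℤ) + 1 - 2) with h | h
      · exact (Int.toNat_lt h).2 h3
      · rw [Int.toNat_of_nonpos (le_of_lt h)]; positivity
    exact lt_of_le_of_lt h1 h4
  -- pinning lemma
  have hpin : ∀ a b : ℤ, a ∈ A → b ∈ A → b ≠ a →
      (∀ x ∈ A, x ≠ a → |x - a| ≤ |b - a| → x = b) → Nf a = b := by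
    intro a b ha hb hba huniq
    obtain ⟨h1, h2, h3⟩ := hNf a ha
    exact huniq _ h1 h2 (h3 b hb hba)
  -- claim: Nf 1 = 4
  have hc1 : Nf 1 = 4 := by
    have h1A : (1:ℤ) ∈ A := by
      have := hsqA 1 le_rfl (by omega)
      norm_num at this; exact this
    have h4A : (4:ℤ) ∈ A := by
      have := hsqA 2 (by omega) hm
      norm_num at this; exact this
    apply hpin 1 4 h1A h4A (by norm_num)
    intro x hx hx1 hxle
    norm_num [abs_le] at hxle
    rcases (hmem x).1 hx with ⟨k, hk1, hk2, rfl⟩ | ⟨hl, hr⟩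
    · have hk3 : k ≤ 2 := by nlinarith [hxle.2]
      interval_cases k
      · norm_num at hx1
      · norm_num
    · exfalso; nlinarith [hxle.2]
  -- claim: Nf (k^2) = (k-1)^2 for 2 ≤ k ≤ m-1
  have hc2 : ∀ k : ℤ, 2 ≤ k → k ≤ (m:ℤ) - 1 → Nf (k ^ 2) = (k - 1) ^ 2 := by
    intro k hk2 hkm
    have hkA : k ^ 2 ∈ A := (hmem _).2 (Or.inl ⟨k, by linarith, by linarith, rfl⟩)
    have hk1A : (k - 1) ^ 2 ∈ A := (hmem _).2 (Or.inl ⟨k - 1, by linarith, by linarith, rfl⟩)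
    apply hpin _ _ hkA hk1A (by nlinarith)
    intro x hx hxne hxle
    have habs : |(k - 1) ^ 2 - k ^ 2| = 2 * k - 1 := by
      have h : (k - 1) ^ 2 - k ^ 2 = -(2 * k - 1) := by ring
      rw [h, abs_neg, abs_of_nonneg (by linarith)]
    rw [habs, abs_le] at hxle
    obtain ⟨hxl, hxr⟩ := hxle
    rcases (hmem x).1 hx with ⟨j, hj1, hjm, rfl⟩ | ⟨hl, hr⟩
    · have hjk : j ≤ k := by
        by_contra h
        push_neg at h
        nlinarith [mul_nonneg (by linarith : (0:ℤ) ≤ j - k - 1) (by linarith : (0:ℤ) ≤ j + k)]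
      have hjne : j ≠ k := by
        intro h; exact hxne (by rw [h])
      have hjk1 : k - 1 ≤ j := by
        by_contra h
        push_neg at h
        nlinarith [mul_pos (by linarith : (0:ℤ) < k - 1 - j) (by linarith : (0:ℤ) < k - 1 + j)]
      have : j = k - 1 := by omega
      rw [this]
    · exfalso
      nlinarith [mul_nonneg (by linarith : (0:ℤ) ≤ (m:ℤ) - 1 - k) (by linarith : (0:ℤ) ≤ (m:ℤ) - 1 + k)]
  -- claim: Nf (m^2) = m^2 + 1
  have hc3 : Nf ((m:ℤ) ^ 2) = (m:ℤ) ^ 2 + 1 := by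
    have hA1 : (m:ℤ) ^ 2 ∈ A := (hmem _).2 (Or.inl ⟨(m:ℤ), by linarith, le_rfl, rfl⟩)
    have hA2 : (m:ℤ) ^ 2 + 1 ∈ A := (hmem _).2 (Or.inr ⟨by linarith, by nlinarith⟩)
    apply hpin _ _ hA1 hA2 (by intro h; nlinarith [h])
    intro x hx hxne hxle
    have h1 : ((m:ℤ) ^ 2 + 1) - (m:ℤ) ^ 2 = 1 := by ring
    rw [h1] at hxle
    norm_num [abs_le] at hxle
    rcases (hmem x).1 hx with ⟨j, hj1, hjm, rfl⟩ | ⟨hl, hr⟩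
    · exfalso
      have hjn : j ≠ (m:ℤ) := fun h => hxne (by rw [h])
      have hj2 : j ≤ (m:ℤ) - 1 := by omega
      nlinarith [mul_nonneg (by linarith : (0:ℤ) ≤ (m:ℤ) - 1 - j) (by linarith : (0:ℤ) ≤ (m:ℤ) - 1 + j), hxle.1]
    · linarith [hxle.2]
  -- the values of the differences
  have hval : ∀ k : ℕ, k ∈ Finset.Icc 1 m →
      Nf ((k:ℤ) ^ 2) - (k:ℤ) ^ 2 =
        if k = 1 then 3 else if k = m then 1 else 1 - 2 * (k:ℤ) := by
    intro k hk
    rw [Finset.mem_Icc] at hk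
    split_ifs with h1 h2
    · subst h1; norm_num [hc1]
    · subst h2; rw [hc3]; ring
    · have hk2 : 2 ≤ (k:ℤ) := by omega
      have hkm : (k:ℤ) ≤ (m:ℤ) - 1 := by omega
      rw [hc2 _ hk2 hkm]; ring
  -- Part 3
  have hpart3 : m ≤ (A.image fun a => Nf a - a).card := by
    have hinj : Set.InjOn (fun k : ℕ => Nf ((k:ℤ) ^ 2) - (k:ℤ) ^ 2) (Finset.Icc 1 m) := by
      intro k hk l hl h
      simp only at h
      rw [Finset.coe_Icc, Set.mem_Icc] at hk hl
      rw [hval k (Finset.mem_Icc.2 hk), hval l (Finset.mem_Icc.2 hl)] at h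
      split_ifs at h <;> omega
    have hTsub : (Finset.Icc 1 m).image (fun k : ℕ => Nf ((k:ℤ) ^ 2) - (k:ℤ) ^ 2) ⊆
        A.image fun a => Nf a - a := by
      intro x hx
      rw [Finset.mem_image] at hx ⊢
      obtain ⟨k, hk, rfl⟩ := hx
      rw [Finset.mem_Icc] at hk
      exact ⟨(k:ℤ) ^ 2, hsqA k hk.1 hk.2, rfl⟩
    calc m = (Finset.Icc 1 m).card := by rw [Nat.card_Icc]; omega
      _ = ((Finset.Icc 1 m).image (fun k : ℕ => Nf ((k:ℤ) ^ 2) - (k:ℤ) ^ 2)).card :=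
        (Finset.card_image_of_injOn hinj).symm
      _ ≤ _ := Finset.card_le_card hTsub
  exact ⟨hcard, hAA, hpart3⟩
end

section
/- Let m ≥ 2 be an integer, let A := {k² : 1 ≤ k ≤ m} ∪ {m² + j : 1 ≤ j ≤ m² − m} ⊂ ℤ, and fix a function a ↦ N_a on A with N_a ∈ A, N_a ≠ a, and |N_a − a| = min{|a' − a| : a' ∈ A, a' ≠ a}. Then for every subset A' ⊆ A with |A'| > (1 − 1/(2m))·|A|, we have |{N_a − a : a ∈ A'}| ≥ m/2. -/
open Finset

set_option maxHeartbeats 1000000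

/-- For the example set `A = {1, 4, 9, …, m²} ∪ {m²+1, …, 2m²-m}` with a fixed
choice of nearest neighbours `N_a`, every subset `A' ⊆ A` with
`|A'| > (1 - 1/(2m))|A|` has at least `m/2` distinct differences `N_a - a`,
`a ∈ A'`. -/
theorem example_set_subsets_many_differences (m : ℕ) (hm : 2 ≤ m)
    (A : Finset ℤ)
    (hAdef : A = ((Finset.Icc 1 m).image fun k : ℕ => (k : ℤ) ^ 2) ∪
      ((Finset.Icc 1 (m ^ 2 - m)).image fun j : ℕ => (m : ℤ) ^ 2 + j))
    (Nf : ℤ → ℤ)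
    (hNf : ∀ a ∈ A, Nf a ∈ A ∧ Nf a ≠ a ∧
      ∀ a' ∈ A, a' ≠ a → |Nf a - a| ≤ |a' - a|) :
    ∀ A' ⊆ A, (1 - 1 / (2 * (m : ℝ))) * (A.card : ℝ) < (A'.card : ℝ) →
      (m : ℝ) / 2 ≤ ((A'.image fun a => Nf a - a).card : ℝ) := by
  intro A' hA' hcard
  have hmm : m ≤ m ^ 2 := by nlinarith
  have hmZ : (2 : ℤ) ≤ (m : ℤ) := by exact_mod_cast hm
  -- membership characterization
  have hmemA : ∀ x : ℤ, x ∈ A ↔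
      (∃ k : ℕ, (1 ≤ k ∧ k ≤ m) ∧ (k : ℤ) ^ 2 = x) ∨
      (∃ j : ℕ, (1 ≤ j ∧ j ≤ m ^ 2 - m) ∧ (m : ℤ) ^ 2 + j = x) := by
    intro x
    subst hAdef
    simp [Finset.mem_union, Finset.mem_image, Finset.mem_Icc]
  -- cast bound for tail indices
  have hjb : ∀ j : ℕ, j ≤ m ^ 2 - m → (j : ℤ) + (m : ℤ) ≤ (m : ℤ) ^ 2 := by
    intro j hj
    have : j + m ≤ m ^ 2 := by omega
    exact_mod_cast this
  -- L2 : Nf 1 = 4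
  have h1A : (1 : ℤ) ∈ A := by
    rw [hmemA]; exact Or.inl ⟨1, ⟨le_refl 1, by omega⟩, by norm_num⟩
  have h4A : (4 : ℤ) ∈ A := by
    rw [hmemA]; exact Or.inl ⟨2, ⟨by omega, hm⟩, by norm_num⟩
  obtain ⟨hN1A, hN1ne, hN1min⟩ := hNf 1 h1A
  have hL2 : Nf 1 - 1 = 3 := by
    have hle : |Nf 1 - 1| ≤ 3 := by
      have := hN1min 4 h4A (by norm_num)
      norm_num at this
      linarith
    rcases abs_le.mp hle with ⟨hlo, hhi⟩
    rcases (hmemA (Nf 1)).mp hN1A with ⟨k, ⟨hk1, hk2⟩, hkeq⟩ | ⟨j, ⟨hj1, hj2⟩, hjeq⟩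
    · have hkZ : (1 : ℤ) ≤ (k : ℤ) := by exact_mod_cast hk1
      have hk2' : k = 2 := by
        by_contra hne
        rcases Nat.lt_or_ge k 2 with h | h
        · have hk1' : k = 1 := by omega
          subst hk1'
          rw [← hkeq] at hN1ne; norm_num at hN1ne
        · have h3 : (3 : ℤ) ≤ (k : ℤ) := by exact_mod_cast (by omega : 3 ≤ k)
          rw [← hkeq] at hhi
          nlinarith
      subst hk2'
      rw [← hkeq]; norm_num
    · have hjZ : (1 : ℤ) ≤ (j : ℤ) := by exact_mod_cast hj1
      rw [← hjeq] at hhi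
      nlinarith
  -- L1 : Nf k² = (k-1)² for 2 ≤ k ≤ m-1
  have hL1 : ∀ k : ℕ, 2 ≤ k → k + 1 ≤ m →
      Nf ((k : ℤ) ^ 2) - (k : ℤ) ^ 2 = -(2 * (k : ℤ) - 1) := by
    intro k hk2 hkm
    have hkZ : (2 : ℤ) ≤ (k : ℤ) := by exact_mod_cast hk2
    have hkmZ : (k : ℤ) + 1 ≤ (m : ℤ) := by exact_mod_cast hkm
    have haA : ((k : ℤ) ^ 2) ∈ A := by
      rw [hmemA]; exact Or.inl ⟨k, ⟨by omega, by omega⟩, rfl⟩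
    have hbA : (((k : ℤ) - 1) ^ 2) ∈ A := by
      rw [hmemA]
      refine Or.inl ⟨k - 1, ⟨by omega, by omega⟩, ?_⟩
      have : ((k - 1 : ℕ) : ℤ) = (k : ℤ) - 1 := by
        push_cast [Nat.cast_sub (by omega : 1 ≤ k)]; ring
      rw [this]
    obtain ⟨hNA, hNne, hNmin⟩ := hNf ((k : ℤ) ^ 2) haA
    have hle : |Nf ((k : ℤ) ^ 2) - (k : ℤ) ^ 2| ≤ 2 * (k : ℤ) - 1 := by
      have hne : ((k : ℤ) - 1) ^ 2 ≠ (k : ℤ) ^ 2 := by nlinarith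
      have := hNmin (((k : ℤ) - 1) ^ 2) hbA hne
      have habs : |((k : ℤ) - 1) ^ 2 - (k : ℤ) ^ 2| = 2 * (k : ℤ) - 1 := by
        rw [abs_sub_comm, abs_of_nonneg (by nlinarith)]; ring
      rw [habs] at this; exact this
    rcases abs_le.mp hle with ⟨hlo, hhi⟩
    rcases (hmemA (Nf ((k : ℤ) ^ 2))).mp hNA with ⟨l, ⟨hl1, hl2⟩, hleq⟩ | ⟨j, ⟨hj1, hj2⟩, hjeq⟩
    · have hlZ : (1 : ℤ) ≤ (l : ℤ) := by exact_mod_cast hl1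
      have hlk : l = k - 1 := by
        by_contra hne
        have hlneK : l ≠ k := by
          intro h; subst h; rw [← hleq] at hNne; exact hNne rfl
        rcases (by omega : l + 2 ≤ k ∨ k + 1 ≤ l) with h | h
        · have hc : (l : ℤ) + 2 ≤ (k : ℤ) := by exact_mod_cast h
          rw [← hleq] at hlo
          nlinarith
        · have hc : (k : ℤ) + 1 ≤ (l : ℤ) := by exact_mod_cast h
          rw [← hleq] at hhi
          nlinarith
      subst hlk
      have hcast : ((k - 1 : ℕ) : ℤ) = (k : ℤ) - 1 := by
        push_cast [Nat.cast_sub (by omega : 1 ≤ k)]; ring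
      rw [← hleq, hcast]; ring
    · have hjZ : (1 : ℤ) ≤ (j : ℤ) := by exact_mod_cast hj1
      rw [← hjeq] at hhi
      have hm2 : ((k : ℤ) + 1) ^ 2 ≤ (m : ℤ) ^ 2 := by nlinarith
      nlinarith
  -- L3 : tail elements have |Nf t - t| = 1
  have hL3 : ∀ j : ℕ, 1 ≤ j → j ≤ m ^ 2 - m → |Nf ((m : ℤ) ^ 2 + j) - ((m : ℤ) ^ 2 + j)| = 1 := by
    intro j hj1 hj2
    have haA : ((m : ℤ) ^ 2 + j) ∈ A := by
      rw [hmemA]; exact Or.inr ⟨j, ⟨hj1, hj2⟩, rfl⟩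
    have hpA : ((m : ℤ) ^ 2 + j - 1) ∈ A := by
      rcases Nat.eq_or_lt_of_le hj1 with h | h
      · rw [hmemA]
        refine Or.inl ⟨m, ⟨by omega, le_refl m⟩, ?_⟩
        rw [← h]; push_cast; ring
      · rw [hmemA]
        refine Or.inr ⟨j - 1, ⟨by omega, by omega⟩, ?_⟩
        have : ((j - 1 : ℕ) : ℤ) = (j : ℤ) - 1 := by
          push_cast [Nat.cast_sub (by omega : 1 ≤ j)]; ring
        rw [this]; ring
    obtain ⟨hNA, hNne, hNmin⟩ := hNf ((m : ℤ) ^ 2 + j) haA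
    have hle : |Nf ((m : ℤ) ^ 2 + j) - ((m : ℤ) ^ 2 + j)| ≤ 1 := by
      have := hNmin ((m : ℤ) ^ 2 + j - 1) hpA (by intro h; linarith [sub_eq_iff_eq_add.mp h])
      simpa using this
    have hge : 1 ≤ |Nf ((m : ℤ) ^ 2 + j) - ((m : ℤ) ^ 2 + j)| :=
      Int.one_le_abs (sub_ne_zero.mpr hNne)
    omega
  -- cardinalities
  have hsqcard : ∀ n : ℕ, ((Finset.Icc 1 n).image fun k : ℕ => (k : ℤ) ^ 2).card = n := by
    intro n
    rw [Finset.card_image_of_injOn, Nat.card_Icc]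
    · omega
    · intro x _ y _ h
      have h' : (x : ℤ) ^ 2 = (y : ℤ) ^ 2 := h
      have hx : (0 : ℤ) ≤ (x : ℤ) := by positivity
      have hy : (0 : ℤ) ≤ (y : ℤ) := by positivity
      have : (x : ℤ) = (y : ℤ) := by nlinarith [h']
      exact_mod_cast this
  have htailcard : ((Finset.Icc 1 (m ^ 2 - m)).image fun j : ℕ => (m : ℤ) ^ 2 + j).card = m ^ 2 - m := by
    rw [Finset.card_image_of_injOn, Nat.card_Icc]
    · omega
    · intro x _ y _ h
      have h' : (m : ℤ) ^ 2 + x = (m : ℤ) ^ 2 + y := h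
      have : (x : ℤ) = (y : ℤ) := by linarith
      exact_mod_cast this
  have hAcard : A.card = m ^ 2 := by
    rw [hAdef, Finset.card_union_of_disjoint, hsqcard, htailcard]
    · omega
    · rw [Finset.disjoint_left]
      rintro x hx hx'
      simp only [Finset.mem_image, Finset.mem_Icc] at hx hx'
      obtain ⟨k, ⟨hk1, hk2⟩, hkeq⟩ := hx
      obtain ⟨j, ⟨hj1, hj2⟩, hjeq⟩ := hx'
      have hkZ : (k : ℤ) ≤ (m : ℤ) := by exact_mod_cast hk2
      have hjZ : (1 : ℤ) ≤ (j : ℤ) := by exact_mod_cast hj1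
      nlinarith [hkeq, hjeq]
  -- real bound on the number of missing elements
  have hmR : (2 : ℝ) ≤ (m : ℝ) := by exact_mod_cast hm
  have hAcardR : (A.card : ℝ) = (m : ℝ) ^ 2 := by rw [hAcard]; push_cast; ring
  have hA'big : (m : ℝ) ^ 2 - (m : ℝ) / 2 < (A'.card : ℝ) := by
    rw [hAcardR] at hcard
    have hmne : (m : ℝ) ≠ 0 := by linarith
    have : (1 - 1 / (2 * (m : ℝ))) * (m : ℝ) ^ 2 = (m : ℝ) ^ 2 - (m : ℝ) / 2 := by
      field_simp
    linarith [this ▸ hcard]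
  -- A' contains a tail element
  have htail_nonempty : ∃ t ∈ A', ∃ j : ℕ, 1 ≤ j ∧ j ≤ m ^ 2 - m ∧ t = (m : ℤ) ^ 2 + j := by
    by_contra hcon
    push_neg at hcon
    have hsub : A' ⊆ (Finset.Icc 1 m).image fun k : ℕ => (k : ℤ) ^ 2 := by
      intro x hx
      rcases (hmemA x).mp (hA' hx) with ⟨k, ⟨hk1, hk2⟩, hkeq⟩ | ⟨j, ⟨hj1, hj2⟩, hjeq⟩
      · exact Finset.mem_image.mpr ⟨k, Finset.mem_Icc.mpr ⟨hk1, hk2⟩, hkeq⟩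
      · exact absurd hjeq.symm (hcon x hx j hj1 hj2)
    have := Finset.card_le_card hsub
    rw [hsqcard] at this
    have : (A'.card : ℝ) ≤ (m : ℝ) := by exact_mod_cast this
    nlinarith
  obtain ⟨t, htA', jt, hjt1, hjt2, hteq⟩ := htail_nonempty
  have htdiff : |Nf t - t| = 1 := hteq ▸ hL3 jt hjt1 hjt2
  have htbig : (m : ℤ) ^ 2 < t := by
    rw [hteq]
    have : (1 : ℤ) ≤ (jt : ℤ) := by exact_mod_cast hjt1
    linarith
  -- the set C of m elements with pairwise distinct differences
  set f : ℤ → ℤ := fun a => Nf a - a with hf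
  set Csq : Finset ℤ := (Finset.Icc 1 (m - 1)).image fun k : ℕ => (k : ℤ) ^ 2 with hCsq
  set C : Finset ℤ := insert t Csq with hC
  have hCsqmem : ∀ x ∈ Csq, ∃ k : ℕ, 1 ≤ k ∧ k ≤ m - 1 ∧ x = (k : ℤ) ^ 2 := by
    intro x hx
    simp only [hCsq, Finset.mem_image, Finset.mem_Icc] at hx
    obtain ⟨k, ⟨h1, h2⟩, h3⟩ := hx
    exact ⟨k, h1, h2, h3.symm⟩
  have htnotin : t ∉ Csq := by
    intro ht
    obtain ⟨k, hk1, hk2, hkeq⟩ := hCsqmem t ht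
    have hkZ : (k : ℤ) ≤ (m : ℤ) - 1 := by
      have : (k : ℤ) ≤ ((m - 1 : ℕ) : ℤ) := by exact_mod_cast hk2
      rw [Nat.cast_sub (by omega : 1 ≤ m)] at this; exact this
    nlinarith [hkeq ▸ htbig]
  have hCcard : C.card = m := by
    rw [hC, Finset.card_insert_of_notMem htnotin, hsqcard]
    omega
  have hCsubA : C ⊆ A := by
    intro x hx
    rcases Finset.mem_insert.mp hx with h | h
    · exact hA' (h ▸ htA')
    · obtain ⟨k, hk1, hk2, hkeq⟩ := hCsqmem x h
      rw [hmemA]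
      exact Or.inl ⟨k, ⟨hk1, by omega⟩, hkeq.symm⟩
  -- the value of f on squares k², 1 ≤ k ≤ m-1
  have hfsq : ∀ k : ℕ, 1 ≤ k → k ≤ m - 1 →
      f ((k : ℤ) ^ 2) = if k = 1 then 3 else -(2 * (k : ℤ) - 1) := by
    intro k hk1 hk2
    by_cases h : k = 1
    · subst h; simp only [if_pos rfl, hf]; norm_num; linarith [hL2]
    · rw [if_neg h, hf]
      exact hL1 k (by omega) (by omega)
  -- f is injective on C
  have hinj : Set.InjOn f ↑C := by
    intro x hx y hy hxy
    have hx2 : x ∈ C := hx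
    have hy2 : y ∈ C := hy
    rw [hC] at hx2 hy2
    rcases Finset.mem_insert.mp hx2 with hx | hx <;> rcases Finset.mem_insert.mp hy2 with hy | hy
    · rw [hx, hy]
    · exfalso
      obtain ⟨k, hk1, hk2, hkeq⟩ := hCsqmem y hy
      have hkZ : (1 : ℤ) ≤ (k : ℤ) := by exact_mod_cast hk1
      have h1 : |f y| = 1 := by rw [← hxy, hx]; exact htdiff
      rw [hkeq, hfsq k hk1 hk2] at h1
      by_cases h : k = 1
      · rw [if_pos h] at h1; norm_num at h1
      · rw [if_neg h] at h1
        have hkZ2 : (2 : ℤ) ≤ (k : ℤ) := by exact_mod_cast (by omega : 2 ≤ k)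
        rw [abs_of_nonpos (by linarith)] at h1
        linarith
    · exfalso
      obtain ⟨k, hk1, hk2, hkeq⟩ := hCsqmem x hx
      have hkZ : (1 : ℤ) ≤ (k : ℤ) := by exact_mod_cast hk1
      have h1 : |f x| = 1 := by rw [hxy, hy]; exact htdiff
      rw [hkeq, hfsq k hk1 hk2] at h1
      by_cases h : k = 1
      · rw [if_pos h] at h1; norm_num at h1
      · rw [if_neg h] at h1
        have hkZ2 : (2 : ℤ) ≤ (k : ℤ) := by exact_mod_cast (by omega : 2 ≤ k)
        rw [abs_of_nonpos (by linarith)] at h1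
        linarith
    · obtain ⟨k, hk1, hk2, hkeq⟩ := hCsqmem x hx
      obtain ⟨l, hl1, hl2, hleq⟩ := hCsqmem y hy
      rw [hkeq, hleq, hfsq k hk1 hk2, hfsq l hl1 hl2] at hxy
      have hkl : k = l := by
        by_cases h : k = 1 <;> by_cases h' : l = 1
        · omega
        · rw [if_pos h, if_neg h'] at hxy
          have : (2 : ℤ) ≤ (l : ℤ) := by exact_mod_cast (by omega : 2 ≤ l)
          linarith
        · rw [if_neg h, if_pos h'] at hxy
          have : (2 : ℤ) ≤ (k : ℤ) := by exact_mod_cast (by omega : 2 ≤ k)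
          linarith
        · rw [if_neg h, if_neg h'] at hxy
          have : (k : ℤ) = (l : ℤ) := by linarith
          exact_mod_cast this
      rw [hkeq, hleq, hkl]
  -- counting
  set B : Finset ℤ := A' ∩ C with hB
  have hBimg : (B.image f).card = B.card :=
    Finset.card_image_of_injOn (hinj.mono (by simp [hB]))
  have himgsub : B.image f ⊆ A'.image f :=
    Finset.image_subset_image (Finset.inter_subset_left)
  have h1 : B.card ≤ (A'.image f).card := by
    rw [← hBimg]; exact Finset.card_le_card himgsub
  have h2 : C.card ≤ B.card + (A \ A').card := by
    have hsplit : C ⊆ B ∪ (A \ A') := by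
      intro x hx
      by_cases h : x ∈ A'
      · exact Finset.mem_union_left _ (Finset.mem_inter.mpr ⟨h, hx⟩)
      · exact Finset.mem_union_right _ (Finset.mem_sdiff.mpr ⟨hCsubA hx, h⟩)
    calc C.card ≤ (B ∪ (A \ A')).card := Finset.card_le_card hsplit
      _ ≤ B.card + (A \ A').card := Finset.card_union_le _ _
  have h3 : (A \ A').card = A.card - A'.card := Finset.card_sdiff_of_subset hA'
  have hA'le : A'.card ≤ A.card := Finset.card_le_card hA'
  have h4 : ((A \ A').card : ℝ) < (m : ℝ) / 2 := by
    have : ((A \ A').card : ℝ) = (A.card : ℝ) - (A'.card : ℝ) := by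
      rw [h3]; push_cast [Nat.cast_sub hA'le]; ring
    rw [this, hAcardR]; linarith
  have h5 : (m : ℝ) ≤ (B.card : ℝ) + ((A \ A').card : ℝ) := by
    rw [hCcard] at h2; exact_mod_cast h2
  have h6 : (B.card : ℝ) ≤ ((A'.image f).card : ℝ) := by exact_mod_cast h1
  have : (A'.image fun a => Nf a - a) = A'.image f := rfl
  rw [this]
  linarith
end
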